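/- arXiv:1501.03983 — 9 statements merged into one kernel-verified Lean document; each statement's English description precedes it below -/
import Mathlib

section
/- Let C be an (n, k, d = n−1)(α, β) exact-repair linear regenerating code over F_q. Then there exist α×α matrices A_{i,j} over F_q, for 1 ≤ i, j ≤ n with i ≠ j, each satisfying rank(A_{i,j}) ≤ β, such that every row of the nα×nα block matrix H_repair — whose (i,i) diagonal α×α block is the identity I_α and whose (i,j) off-diagonal α×α block is A_{i,j} — lies in the dual code C^⊥; equivalently, every codeword c ∈ C satisfies c_i + Σ_{j≠i} A_{i,j} c_j = 0 for every i ∈ {1, …, n}. -/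
open scoped BigOperators

/-- An `(n, k, d = n-1), (α, β)` exact-repair linear regenerating code over `F`. -/
def IsERRC (F : Type*) [Field F] (n k a b : ℕ)
    (C : Submodule F ((Fin n × Fin a) → F)) : Prop :=
  (∀ S : Finset (Fin n), S.card = k →
      ∀ c ∈ C, (∀ p : Fin n × Fin a, p.1 ∈ S → c p = 0) → c = 0) ∧
  (∀ f : Fin n, ∃ (r : Fin n → ((Fin a → F) →ₗ[F] (Fin b → F)))
      (ψ : (({j : Fin n // j ≠ f} → (Fin b → F)) →ₗ[F] (Fin a → F))),
      ∀ c ∈ C, (fun i => c (f, i)) = ψ (fun j => r j.val (fun i => c (j.val, i))))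

lemma aux_rank (F : Type*) [Field F] {a b : ℕ} (g : (Fin a → F) →ₗ[F] (Fin b → F))
    (h : (Fin b → F) →ₗ[F] (Fin a → F)) :
    (LinearMap.toMatrix' (h.comp g)).rank ≤ b := by
  have hml : (LinearMap.toMatrix' (h.comp g)).mulVecLin = h.comp g := by
    rw [← Matrix.toLin'_apply', Matrix.toLin'_toMatrix']
  rw [Matrix.rank, hml, LinearMap.range_comp]
  exact le_trans (Submodule.finrank_map_le _ _)
    (le_trans (Submodule.finrank_le _) (by simp))

/-- Lemma 2, exact repair: there exist `α×α` matrices `A i j` of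
rank at most `β` (for `i ≠ j`) such that every codeword `c ∈ C` satisfies
`c_i + ∑_{j ≠ i} A_{i,j} c_j = 0` for every node `i`; equivalently, all rows of
the corresponding block matrix `H_repair` (with identity diagonal blocks) lie in
the dual code `C^⊥`. -/
theorem stmt2 (F : Type*) [Field F] [Fintype F] (n k a b : ℕ)
    (hn : 2 ≤ n) (hk1 : 1 ≤ k) (hk2 : k ≤ n - 1) (hb : 1 ≤ b) (hba : b ≤ a)
    (C : Submodule F ((Fin n × Fin a) → F))
    (hC : IsERRC F n k a b C) :
    ∃ A : Fin n → Fin n → Matrix (Fin a) (Fin a) F,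
      (∀ i j, i ≠ j → (A i j).rank ≤ b) ∧
      (∀ c ∈ C, ∀ i : Fin n,
        (fun x => c (i, x)) +
          ∑ j ∈ Finset.univ.erase i, (A i j).mulVec (fun x => c (j, x)) = 0) := by
  obtain ⟨_, hrep⟩ := hC
  choose r ψ hψ using hrep
  refine ⟨fun i j => if h : j = i then 0 else LinearMap.toMatrix'
      (((-(ψ i)).comp
        (LinearMap.single F (fun _ : {j' : Fin n // j' ≠ i} => Fin b → F) ⟨j, h⟩)).comp
        (r i j)), ?_, ?_⟩
  · intro i j hij
    beta_reduce
    rw [dif_neg (Ne.symm hij)]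
    exact aux_rank F _ _
  · intro c hc i
    beta_reduce
    have h1 : (fun x => c (i, x)) = ψ i (fun j => r i j.val (fun x => c (j.val, x))) :=
      hψ i c hc
    have h2 : (fun j : {j' : Fin n // j' ≠ i} => r i j.val (fun x => c (j.val, x)))
        = ∑ j : {j' : Fin n // j' ≠ i},
            Pi.single j (r i j.val (fun x => c (j.val, x))) :=
      (Finset.univ_sum_single _).symm
    have h3 : ∑ j ∈ Finset.univ.erase i,
        (if h : j = i then (0 : Matrix (Fin a) (Fin a) F)
          else LinearMap.toMatrix'
            (((-(ψ i)).comp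
              (LinearMap.single F (fun _ : {j' : Fin n // j' ≠ i} => Fin b → F) ⟨j, h⟩)).comp
              (r i j))).mulVec (fun x => c (j, x))
        = ∑ j : {j' : Fin n // j' ≠ i},
            (-(ψ i)) (Pi.single j (r i j.val (fun x => c (j.val, x)))) := by
      rw [Finset.sum_subtype (p := fun j => j ≠ i) (Finset.univ.erase i)
        (fun j => by simp [Finset.mem_erase]) (fun j =>
          (if h : j = i then (0 : Matrix (Fin a) (Fin a) F)
            else LinearMap.toMatrix'
              (((-(ψ i)).comp
                (LinearMap.single F (fun _ : {j' : Fin n // j' ≠ i} => Fin b → F) ⟨j, h⟩)).comp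
                (r i j))).mulVec (fun x => c (j, x)))]
      refine Finset.sum_congr rfl fun j _ => ?_
      rw [dif_neg j.prop, ← Matrix.mulVecLin_apply, ← Matrix.toLin'_apply',
        Matrix.toLin'_toMatrix']
      rfl
    rw [h3, h1, ← map_sum (-(ψ i)), ← h2]
    simp
end

section
/- Let C be an (n, k, d = n−1)(α, β) exact-repair linear regenerating code over F_q with file size B = dim C. Then B ≤ Σ_{j=0}^{k−1} min(α, (n−1−j)β). -/
open scoped BigOperators

/-
Restrict the code to the codewords vanishing on more and more nodes, one node at a time. Once
`j` nodes are zero, the repair of a further node receives nonzero symbols only from the `n-1-j`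
other helpers, so imposing that this node also vanishes cuts the dimension by at most
`min α ((n-1-j)β)`. After `k` nodes only the zero codeword is left, by data collection.
-/

namespace Submodule

variable {K V W₁ W₂ : Type*} [Field K] [AddCommGroup V] [Module K V] [FiniteDimensional K V]
  [AddCommGroup W₁] [Module K W₁] [AddCommGroup W₂] [Module K W₂]

theorem finrank_inf_ker_add_finrank_map (p : Submodule K V) (g : V →ₗ[K] W₁) :
    Module.finrank K ↥(p ⊓ LinearMap.ker g) + Module.finrank K ↥(p.map g)
      = Module.finrank K p := by
  have hker : LinearMap.ker (g.domRestrict p) = (p ⊓ LinearMap.ker g).comap p.subtype := by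
    ext x
    simp
  rw [← (g.domRestrict p).finrank_range_add_finrank_ker, LinearMap.range_domRestrict, hker,
    (Submodule.comapSubtypeEquivOfLe inf_le_left).finrank_eq, add_comm]

theorem finrank_map_le_finrank_map_of_inf_ker_le (p : Submodule K V) {f : V →ₗ[K] W₁}
    {g : V →ₗ[K] W₂} (h : p ⊓ LinearMap.ker f ≤ LinearMap.ker g) :
    Module.finrank K ↥(p.map g) ≤ Module.finrank K ↥(p.map f) := by
  have hmono : Module.finrank K ↥(p ⊓ LinearMap.ker f)
      ≤ Module.finrank K ↥(p ⊓ LinearMap.ker g) :=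
    Submodule.finrank_mono (le_inf inf_le_left h)
  have hf := p.finrank_inf_ker_add_finrank_map f
  have hg := p.finrank_inf_ker_add_finrank_map g
  omega

end Submodule

namespace RegeneratingCode

variable {F : Type*} [Field F] {n a b : ℕ}

def node (j : Fin n) : ((Fin n × Fin a) → F) →ₗ[F] (Fin a → F) :=
  LinearMap.pi fun i => LinearMap.proj (j, i)

@[simp]
theorem node_apply (j : Fin n) (c : (Fin n × Fin a) → F) : node j c = fun i => c (j, i) := rfl

def vanishingOn (S : Finset (Fin n)) : Submodule F ((Fin n × Fin a) → F) :=
  ⨅ j ∈ S, LinearMap.ker (node j)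

theorem mem_vanishingOn {S : Finset (Fin n)} {c : (Fin n × Fin a) → F} :
    c ∈ vanishingOn S ↔ ∀ p : Fin n × Fin a, p.1 ∈ S → c p = 0 := by
  simp only [vanishingOn, Submodule.mem_iInf, LinearMap.mem_ker, node_apply, funext_iff,
    Pi.zero_apply, Prod.forall]
  exact ⟨fun h j i hj => h j hj i, fun h j hj i => h j i hj⟩

@[simp]
theorem vanishingOn_empty : vanishingOn (F := F) (a := a) (∅ : Finset (Fin n)) = ⊤ := by
  ext c
  simp [mem_vanishingOn]

theorem vanishingOn_insert [DecidableEq (Fin n)] (f : Fin n) (S : Finset (Fin n)) :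
    vanishingOn (insert f S) = vanishingOn S ⊓ LinearMap.ker (node (F := F) (a := a) f) := by
  rw [vanishingOn, vanishingOn, Finset.iInf_insert, inf_comm]

def IsExactRepairable (C : Submodule F ((Fin n × Fin a) → F)) (b : ℕ) : Prop :=
  ∀ f : Fin n, ∃ (r : Fin n → ((Fin a → F) →ₗ[F] (Fin b → F)))
      (ψ : (({j : Fin n // j ≠ f} → (Fin b → F)) →ₗ[F] (Fin a → F))),
      ∀ c ∈ C, (fun i => c (f, i)) = ψ (fun j => r j.val (fun i => c (j.val, i)))

variable {C : Submodule F ((Fin n × Fin a) → F)}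

theorem finrank_map_node_le (f : Fin n) {S : Finset (Fin n)} (hf : f ∉ S)
    (r : Fin n → ((Fin a → F) →ₗ[F] (Fin b → F)))
    (ψ : ({j : Fin n // j ≠ f} → (Fin b → F)) →ₗ[F] (Fin a → F))
    (hψ : ∀ c ∈ C, (fun i => c (f, i)) = ψ (fun j => r j.val (fun i => c (j.val, i)))) :
    Module.finrank F ↥((C ⊓ vanishingOn S).map (node f)) ≤ min a ((n - 1 - S.card) * b) := by
  classical
  let T := (insert f S)ᶜ
  let helperSymbols : ((Fin n × Fin a) → F) →ₗ[F] (T → Fin b → F) :=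
    LinearMap.pi fun j => r j ∘ₗ node j
  have hker : C ⊓ vanishingOn S ⊓ LinearMap.ker helperSymbols ≤ LinearMap.ker (node f) := by
    rintro c ⟨⟨hcC, hcS⟩, hc⟩
    have hsymbols : (fun j : {j : Fin n // j ≠ f} => r j.val (fun i => c (j.val, i))) = 0 := by
      funext j
      by_cases hj : j.val ∈ S
      · have : (fun i => c (j.val, i)) = 0 := funext fun i => mem_vanishingOn.1 hcS _ hj
        rw [this, map_zero, Pi.zero_apply]
      · exact congrFun hc ⟨j.val, by simp [T, j.2, hj]⟩
    simp only [LinearMap.mem_ker]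
    rw [node_apply, hψ c hcC, hsymbols, map_zero]
  have hT : T.card = n - 1 - S.card := by
    rw [Finset.card_compl, Finset.card_insert_of_notMem hf, Fintype.card_fin]
    omega
  refine le_min ?_ ?_
  · simpa using Submodule.finrank_le ((C ⊓ vanishingOn S).map (node f))
  · calc Module.finrank F ↥((C ⊓ vanishingOn S).map (node f))
        ≤ Module.finrank F ↥((C ⊓ vanishingOn S).map helperSymbols) :=
          Submodule.finrank_map_le_finrank_map_of_inf_ker_le _ hker
      _ ≤ Module.finrank F (T → Fin b → F) := Submodule.finrank_le _
      _ = (n - 1 - S.card) * b := by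
          rw [Module.finrank_pi_fintype]
          simp [hT]

theorem finrank_le_finrank_inf_vanishingOn_add_sum (hC : IsExactRepairable C b)
    (S : Finset (Fin n)) :
    Module.finrank F C ≤ Module.finrank F ↥(C ⊓ vanishingOn S)
      + ∑ j ∈ Finset.range S.card, min a ((n - 1 - j) * b) := by
  classical
  induction S using Finset.induction_on with
  | empty =>
    rw [vanishingOn_empty, inf_top_eq, Finset.card_empty, Finset.sum_range_zero, add_zero]
  | insert f S hf ih =>
    obtain ⟨r, ψ, hψ⟩ := hC f
    have hstep := (C ⊓ vanishingOn S).finrank_inf_ker_add_finrank_map (node f)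
    rw [inf_assoc, ← vanishingOn_insert] at hstep
    have hnode := finrank_map_node_le f hf r ψ hψ
    rw [Finset.card_insert_of_notMem hf, Finset.sum_range_succ]
    omega

end RegeneratingCode

theorem stmt3_general (F : Type*) [Field F] (n k a b : ℕ)
    (hk2 : k ≤ n - 1)
    (C : Submodule F ((Fin n × Fin a) → F))
    (hC : IsERRC F n k a b C) :
    Module.finrank F C ≤ ∑ j ∈ Finset.range k, min a ((n - 1 - j) * b) := by
  obtain ⟨S, -, hS⟩ := Finset.exists_subset_card_eq
    (show k ≤ (Finset.univ : Finset (Fin n)).card by simp; omega)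
  have hzero : C ⊓ RegeneratingCode.vanishingOn S = ⊥ := by
    rw [eq_bot_iff]
    rintro c ⟨hcC, hcS⟩
    exact hC.1 S hS c hcC (RegeneratingCode.mem_vanishingOn.1 hcS)
  have hbound := RegeneratingCode.finrank_le_finrank_inf_vanishingOn_add_sum hC.2 S
  rwa [hzero, finrank_bot, zero_add, hS] at hbound

/-- cut-set bound for exact-repair linear codes, `d = n-1`:
`B ≤ ∑_{j=0}^{k-1} min(α, (n-1-j)β)`. -/
theorem stmt3 (F : Type*) [Field F] [Fintype F] (n k a b : ℕ)
    (hn : 2 ≤ n) (hk1 : 1 ≤ k) (hk2 : k ≤ n - 1) (hb : 1 ≤ b) (hba : b ≤ a)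
    (C : Submodule F ((Fin n × Fin a) → F))
    (hC : IsERRC F n k a b C) :
    Module.finrank F C ≤ ∑ j ∈ Finset.range k, min a ((n - 1 - j) * b) :=
  stmt3_general F n k a b hk2 C hC
end

section
/- Let F be a field and let H be an mα×mα matrix over F partitioned into m×m blocks A_{i,j} of size α×α. Then for every j with 2 ≤ j ≤ m, rank(H|_{[j]}) − rank(H|_{[j−1]}) ≥ max( rank(A_{j,j}) − Σ_{ℓ=1}^{j−1} rank(A_{j,ℓ}), 0 ), where [t] = {1, …, t}. -/
/-!
Let `π` project onto the coordinates of the `j`-th thick row. The column space `W` of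
`H|_[j]` contains the column space `V` of `H|_[j-1]`, and since `V ∩ ker π ⊆ W ∩ ker π`,
rank-nullity gives `dim W - dim V ≥ dim π W - dim π V` (Frobenius' rank inequality).
Finally `π W` contains the columns of `A_{j,j}`, while `π V` is spanned by the columns of
`A_{j,1}, …, A_{j,j-1}`.
-/

open Module Matrix

namespace Submodule

variable {K M N : Type*} [DivisionRing K] [AddCommGroup M] [Module K M] [AddCommGroup N]
  [Module K N]

theorem finrank_map_add_finrank_inf_ker [FiniteDimensional K M] (f : M →ₗ[K] N)
    (V : Submodule K M) :
    finrank K (V.map f) + finrank K ↥(V ⊓ LinearMap.ker f) = finrank K V := by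
  have hker :
      finrank K (LinearMap.ker (f.domRestrict V)) = finrank K ↥(V ⊓ LinearMap.ker f) := by
    rw [LinearMap.ker_domRestrict, ← map_comap_subtype V (LinearMap.ker f)]
    exact (equivMapOfInjective _ (injective_subtype V) _).finrank_eq
  rw [← hker, ← LinearMap.range_domRestrict]
  exact LinearMap.finrank_range_add_finrank_ker _

theorem finrank_map_add_finrank_le_of_le [FiniteDimensional K M] (f : M →ₗ[K] N)
    {V W : Submodule K M} (hVW : V ≤ W) :
    finrank K (W.map f) + finrank K V ≤ finrank K (V.map f) + finrank K W := by
  have hker : finrank K ↥(V ⊓ LinearMap.ker f) ≤ finrank K ↥(W ⊓ LinearMap.ker f) :=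
    finrank_mono (inf_le_inf_right _ hVW)
  have hV := finrank_map_add_finrank_inf_ker f V
  have hW := finrank_map_add_finrank_inf_ker f W
  omega

theorem finrank_finset_sup_le_sum [FiniteDimensional K M] {ι : Type*} (s : Finset ι)
    (p : ι → Submodule K M) : finrank K ↥(s.sup p) ≤ ∑ i ∈ s, finrank K (p i) := by
  classical
  induction s using Finset.induction_on with
  | empty => simp
  | insert i s hi ih =>
    rw [Finset.sup_insert, Finset.sum_insert hi]
    exact (finrank_add_le_finrank_add_finrank _ _).trans (Nat.add_le_add_left ih _)

end Submodule

namespace Matrix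

variable {K : Type*} [Field K]

theorem rank_mul_add_rank_mul_le {l m n o : Type*} [Fintype m] [Fintype n] [Fintype o]
    (P : Matrix l m K) (A : Matrix m n K) (Q : Matrix n o K) :
    (P * A).rank + (A * Q).rank ≤ (P * A * Q).rank + A.rank := by
  have hAQ : LinearMap.range (A * Q).mulVecLin ≤ LinearMap.range A.mulVecLin := by
    rw [mulVecLin_mul, LinearMap.range_comp]
    exact LinearMap.map_le_range
  unfold rank
  rw [Matrix.mul_assoc, mulVecLin_mul P A, mulVecLin_mul P (A * Q), LinearMap.range_comp,
    LinearMap.range_comp]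
  exact Submodule.finrank_map_add_finrank_le_of_le P.mulVecLin hAQ

theorem rank_submatrix_row_add_rank_submatrix_col_le {m n m₀ n₀ : Type*} [Fintype m]
    [Fintype n] [Fintype n₀] [DecidableEq m] [DecidableEq n] (A : Matrix m n K)
    (r : m₀ → m) (c : n₀ → n) :
    (A.submatrix r id).rank + (A.submatrix id c).rank ≤ (A.submatrix r c).rank + A.rank := by
  have h := rank_mul_add_rank_mul_le ((1 : Matrix m m K).submatrix r (Equiv.refl m)) A
    ((1 : Matrix n n K).submatrix (Equiv.refl n) c)
  rw [one_submatrix_mul, mul_submatrix_one, mul_submatrix_one] at h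
  simpa only [submatrix_submatrix, Equiv.refl_symm, Equiv.coe_refl, Function.id_comp,
    Function.comp_id] using h

theorem rank_le_sum_rank_of_forall_col_eq {k c ι κ : Type*} [Fintype k] [Fintype c]
    [Fintype κ] (N : Matrix k c K) (s : Finset ι) (B : ι → Matrix k κ K)
    (hN : ∀ p, ∃ i ∈ s, ∃ y, N.col p = (B i).col y) :
    N.rank ≤ ∑ i ∈ s, (B i).rank := by
  simp only [rank_eq_finrank_span_cols]
  refine (Submodule.finrank_mono ?_).trans (Submodule.finrank_finset_sup_le_sum s _)
  rw [Submodule.span_le]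
  rintro _ ⟨p, rfl⟩
  obtain ⟨i, hi, y, hy⟩ := hN p
  exact Finset.le_sup (f := fun i => Submodule.span K (Set.range (B i).col)) hi
    (Submodule.subset_span ⟨y, hy.symm⟩)

end Matrix

theorem stmt4_general (F : Type*) [Field F] (m a : ℕ)
    (H : Matrix (Fin m × Fin a) (Fin m × Fin a) F) :
    ∀ j : Fin m, 1 ≤ (j : ℕ) →
      (((H.submatrix id
            (fun p : {p : Fin m × Fin a // (p.1 : ℕ) < (j : ℕ) + 1} =>
              (p : Fin m × Fin a))).rank : ℤ)
        - ((H.submatrix id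
            (fun p : {p : Fin m × Fin a // (p.1 : ℕ) < (j : ℕ)} =>
              (p : Fin m × Fin a))).rank : ℤ))
      ≥ max (((Matrix.of fun x y : Fin a => H (j, x) (j, y)).rank : ℤ)
            - ∑ l ∈ Finset.univ.filter (fun l : Fin m => l < j),
                ((Matrix.of fun x y : Fin a => H (j, x) (l, y)).rank : ℤ)) 0 := by
  intro j _
  set M₁ := H.submatrix id
    (fun p : {p : Fin m × Fin a // (p.1 : ℕ) < (j : ℕ) + 1} => (p : Fin m × Fin a))
  set M₀ := H.submatrix id
    (fun p : {p : Fin m × Fin a // (p.1 : ℕ) < (j : ℕ)} => (p : Fin m × Fin a))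
  let blockRow : Fin a → Fin m × Fin a := fun x => (j, x)
  let firstBlocks : {p : Fin m × Fin a // (p.1 : ℕ) < (j : ℕ)} →
      {p : Fin m × Fin a // (p.1 : ℕ) < (j : ℕ) + 1} := fun p => ⟨p, Nat.lt_succ_of_lt p.2⟩
  have hfrob : (M₁.submatrix blockRow id).rank + M₀.rank ≤
      (M₀.submatrix blockRow id).rank + M₁.rank :=
    M₁.rank_submatrix_row_add_rank_submatrix_col_le blockRow firstBlocks
  have hmono : M₀.rank ≤ M₁.rank := rank_submatrix_le M₁ id firstBlocks
  have hdiag : (Matrix.of fun x y : Fin a => H (j, x) (j, y)).rank ≤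
      (M₁.submatrix blockRow id).rank :=
    (rank_submatrix_le (M₁.submatrix blockRow id) id
      (fun y => ⟨(j, y), Nat.lt_succ_self _⟩) :)
  have hoff : (M₀.submatrix blockRow id).rank ≤
      ∑ l ∈ Finset.univ.filter (fun l : Fin m => l < j),
        (Matrix.of fun x y : Fin a => H (j, x) (l, y)).rank :=
    rank_le_sum_rank_of_forall_col_eq _ _
      (fun l => Matrix.of fun x y : Fin a => H (j, x) (l, y))
      fun p => ⟨p.1.1, Finset.mem_filter.2 ⟨Finset.mem_univ _, Fin.lt_def.2 p.2⟩,
        p.1.2, rfl⟩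
  rw [ge_iff_le, max_le_iff, ← Nat.cast_sum]
  omega

/-- for a block matrix `H` with `m × m` blocks of size `α × α`, for every
`j` (0-indexed, `j ≥ 1`), the increase in rank from the first `j` thick columns to the
first `j+1` thick columns is at least `max(rank A_{j,j} - ∑_{ℓ<j} rank A_{j,ℓ}, 0)`. -/
theorem stmt4 (F : Type*) [Field F] (m a : ℕ) (hm : 2 ≤ m) (ha : 1 ≤ a)
    (H : Matrix (Fin m × Fin a) (Fin m × Fin a) F) :
    ∀ j : Fin m, 1 ≤ (j : ℕ) →
      (((H.submatrix id
            (fun p : {p : Fin m × Fin a // (p.1 : ℕ) < (j : ℕ) + 1} =>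
              (p : Fin m × Fin a))).rank : ℤ)
        - ((H.submatrix id
            (fun p : {p : Fin m × Fin a // (p.1 : ℕ) < (j : ℕ)} =>
              (p : Fin m × Fin a))).rank : ℤ))
      ≥ max (((Matrix.of fun x y : Fin a => H (j, x) (j, y)).rank : ℤ)
            - ∑ l ∈ Finset.univ.filter (fun l : Fin m => l < j),
                ((Matrix.of fun x y : Fin a => H (j, x) (l, y)).rank : ℤ)) 0 :=
  stmt4_general F m a H
end

section
/- Let F be a field and let H be a 4α×4α matrix over F of repair form with parameters (4, α, β). Then 3·rank(H) ≥ 8α − 6β; equivalently, rank(H) ≥ ⌈(8α − 6β)/3⌉. -/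
open scoped BigOperators

/-- The `(i, j)` block (of size `α × α`) of an `nα × nα` matrix. -/
def blockOf {F : Type*} [Field F] {n a : ℕ}
    (M : Matrix (Fin n × Fin a) (Fin n × Fin a) F) (i j : Fin n) :
    Matrix (Fin a) (Fin a) F :=
  Matrix.of fun x y => M (i, x) (j, y)

/-- An `nα × nα` matrix is of repair form with parameters `(n, α, β)` if its diagonal
blocks are the identity and its off-diagonal blocks have rank at most `β`. -/
def IsRepairForm {F : Type*} [Field F] (n a b : ℕ)
    (M : Matrix (Fin n × Fin a) (Fin n × Fin a) F) : Prop :=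
  (∀ i, blockOf M i i = 1) ∧ (∀ i j, i ≠ j → (blockOf M i j).rank ≤ b)

namespace Stmt7Aux

open Matrix Module LinearMap Submodule

variable {F : Type*} [Field F] {a : ℕ}
variable (H : Matrix (Fin 4 × Fin a) (Fin 4 × Fin a) F)

/-- the left kernel of `H`. -/
noncomputable def KK : Submodule F ((Fin 4 × Fin a) → F) :=
  LinearMap.ker (Matrix.mulVecLin Hᵀ)

/-- multiplication by the `(i,j)` block on the right, as a linear map on row blocks. -/
noncomputable def Bop (i j : Fin 4) : (Fin a → F) →ₗ[F] (Fin a → F) :=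
  Matrix.mulVecLin (blockOf H i j)ᵀ

/-- block `i` of an element of the left kernel. -/
noncomputable def fK (i : Fin 4) : (KK H) →ₗ[F] (Fin a → F) :=
  (LinearMap.funLeft F F (fun t => (i, t))).comp (KK H).subtype

lemma fK_apply (i : Fin 4) (x : KK H) (t : Fin a) : fK H i x t = (x : (Fin 4 × Fin a) → F) (i, t) := rfl

lemma col_eq (x : KK H) (j : Fin 4) :
    ∑ i : Fin 4, Bop H i j (fK H i x) = 0 := by
  have hx : Matrix.mulVecLin Hᵀ (x : (Fin 4 × Fin a) → F) = 0 := x.2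
  funext y
  have h := congrFun hx (j, y)
  simp only [Matrix.mulVecLin_apply, Matrix.mulVec, dotProduct,
    Matrix.transpose_apply, Pi.zero_apply, Fintype.sum_prod_type] at h
  simp only [Finset.sum_apply, Bop, Matrix.mulVecLin_apply, Matrix.mulVec,
    dotProduct, Matrix.transpose_apply, Pi.zero_apply]
  rw [← h]
  refine Finset.sum_congr rfl fun i _ => Finset.sum_congr rfl fun t _ => ?_
  rfl

lemma Bop_diag (hd : ∀ i, blockOf H i i = 1) (j : Fin 4) :
    Bop H j j = LinearMap.id := by
  rw [Bop, hd j, Matrix.transpose_one, Matrix.mulVecLin_one]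

lemma col0 (hd : ∀ i, blockOf H i i = 1) (x : KK H) :
    fK H 0 x + Bop H 1 0 (fK H 1 x) + Bop H 2 0 (fK H 2 x) + Bop H 3 0 (fK H 3 x) = 0 := by
  have h := col_eq H x 0
  rw [Fin.sum_univ_four, Bop_diag H hd 0] at h
  simpa using h

lemma col1 (hd : ∀ i, blockOf H i i = 1) (x : KK H) :
    Bop H 0 1 (fK H 0 x) + fK H 1 x + Bop H 2 1 (fK H 2 x) + Bop H 3 1 (fK H 3 x) = 0 := by
  have h := col_eq H x 1
  rw [Fin.sum_univ_four, Bop_diag H hd 1] at h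
  simpa using h

lemma col2 (hd : ∀ i, blockOf H i i = 1) (x : KK H) :
    Bop H 0 2 (fK H 0 x) + Bop H 1 2 (fK H 1 x) + fK H 2 x + Bop H 3 2 (fK H 3 x) = 0 := by
  have h := col_eq H x 2
  rw [Fin.sum_univ_four, Bop_diag H hd 2] at h
  simpa using h

lemma col3 (hd : ∀ i, blockOf H i i = 1) (x : KK H) :
    Bop H 0 3 (fK H 0 x) + Bop H 1 3 (fK H 1 x) + Bop H 2 3 (fK H 2 x) + fK H 3 x = 0 := by
  have h := col_eq H x 3
  rw [Fin.sum_univ_four, Bop_diag H hd 3] at h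
  simpa using h

/-- rearrangement helpers -/
lemma slot1_eq {W : Type*} [AddCommGroup W] {A B C D : W} (h : A + B + C + D = 0) :
    A = -B - C - D := by
  have h2 : A = (A + B + C + D) - B - C - D := by abel
  rw [h] at h2; simpa using h2

lemma slot2_eq {W : Type*} [AddCommGroup W] {A B C D : W} (h : A + B + C + D = 0) :
    B = -A - C - D := by
  have h2 : B = (A + B + C + D) - A - C - D := by abel
  rw [h] at h2; simpa using h2

lemma slot3_eq {W : Type*} [AddCommGroup W] {A B C D : W} (h : A + B + C + D = 0) :
    C = -A - B - D := by
  have h2 : C = (A + B + C + D) - A - B - D := by abel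
  rw [h] at h2; simpa using h2

lemma slot4_eq {W : Type*} [AddCommGroup W] {A B C D : W} (h : A + B + C + D = 0) :
    D = -A - B - C := by
  have h2 : D = (A + B + C + D) - A - B - C := by abel
  rw [h] at h2; simpa using h2

/-- an element of the kernel with all four blocks zero is zero. -/
lemma x_eq_zero (x : KK H) (h0 : fK H 0 x = 0) (h1 : fK H 1 x = 0)
    (h2 : fK H 2 x = 0) (h3 : fK H 3 x = 0) : x = 0 := by
  apply Subtype.ext
  funext p
  obtain ⟨i, t⟩ := p
  have hz : ((0 : KK H) : (Fin 4 × Fin a) → F) (i, t) = 0 := rfl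
  fin_cases i
  · exact (congrFun h0 t).trans rfl
  · exact (congrFun h1 t).trans rfl
  · exact (congrFun h2 t).trans rfl
  · exact (congrFun h3 t).trans rfl


/-- row image of the `(i,j)` block. -/
noncomputable def Rsp (i j : Fin 4) : Submodule F (Fin a → F) :=
  LinearMap.range (Bop H i j)

lemma finrank_Rsp (i j : Fin 4) :
    finrank F (Rsp H i j) = (blockOf H i j).rank := by
  have h1 : finrank F (Rsp H i j) = ((blockOf H i j)ᵀ).rank := rfl
  rw [h1, Matrix.rank_transpose]

section chain

variable {V W : Type*} [AddCommGroup V] [Module F V] [AddCommGroup W] [Module F W]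
  [FiniteDimensional F V] [FiniteDimensional F W]

lemma finrank_ker_comp (P : Submodule F V) (g : V →ₗ[F] W) :
    finrank F (LinearMap.ker (g.comp P.subtype)) = finrank F ↥(P ⊓ LinearMap.ker g) := by
  have h1 : LinearMap.ker (g.comp P.subtype)
      = Submodule.comap P.subtype (P ⊓ LinearMap.ker g) := by
    rw [LinearMap.ker_comp]
    ext ⟨x, hx⟩
    simp [Submodule.mem_comap, hx]
  rw [h1]
  exact (Submodule.comapSubtypeEquivOfLe (inf_le_left : P ⊓ LinearMap.ker g ≤ P)).finrank_eq

/-- rank–nullity on a restriction. -/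
lemma finrank_eq_chain (P : Submodule F V) (g : V →ₗ[F] W) :
    finrank F P = finrank F (LinearMap.range (g.comp P.subtype))
      + finrank F ↥(P ⊓ LinearMap.ker g) := by
  rw [← finrank_ker_comp (F := F) P g]
  exact (LinearMap.finrank_range_add_finrank_ker (g.comp P.subtype)).symm

lemma finrank_le_chain (P : Submodule F V) (g : V →ₗ[F] W) (S : Submodule F W)
    (hmem : ∀ x ∈ P, g x ∈ S) :
    finrank F P ≤ finrank F S + finrank F ↥(P ⊓ LinearMap.ker g) := by
  rw [finrank_eq_chain (F := F) P g]
  have hle : LinearMap.range (g.comp P.subtype) ≤ S := by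
    rintro _ ⟨⟨x, hx⟩, rfl⟩
    exact hmem x hx
  exact Nat.add_le_add_right (Submodule.finrank_mono hle) _

end chain


section mems

lemma mem_sup_of (S T : Submodule F (Fin a → F)) {A B : Fin a → F}
    (hA : A ∈ S) (hB : B ∈ T) : -A - B - 0 ∈ S ⊔ T := by
  refine Submodule.sub_mem _ (Submodule.sub_mem _ (Submodule.neg_mem _ ?_) ?_) (Submodule.zero_mem _)
  · exact Submodule.mem_sup_left hA
  · exact Submodule.mem_sup_right hB

lemma mem1' (hd : ∀ i, blockOf H i i = 1) (x : KK H) (hx : x ∈ (LinearMap.ker (fK H 2) ⊔ LinearMap.ker (fK H 3) : Submodule F (KK H))) :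
    fK H 2 x ∈ Rsp H 0 2 ⊔ Rsp H 1 2 := by
  obtain ⟨s, hs, t, ht, rfl⟩ := Submodule.mem_sup.1 hx
  rw [map_add, LinearMap.mem_ker.1 hs, zero_add]
  have h := slot3_eq (col2 H hd t)
  rw [LinearMap.mem_ker.1 ht, map_zero] at h
  rw [h]
  exact mem_sup_of _ _ ⟨_, rfl⟩ ⟨_, rfl⟩

lemma mem2' (hd : ∀ i, blockOf H i i = 1) (x : KK H) (h2 : fK H 2 x = 0) :
    fK H 3 x ∈ Rsp H 0 3 ⊔ Rsp H 1 3 := by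
  have h := slot4_eq (col3 H hd x)
  rw [h2, map_zero] at h
  rw [h]
  exact mem_sup_of _ _ ⟨_, rfl⟩ ⟨_, rfl⟩

lemma mem3' (hd : ∀ i, blockOf H i i = 1) (x : KK H) (h2 : fK H 2 x = 0) (h3 : fK H 3 x = 0) :
    Bop H 0 2 (fK H 0 x) ∈ Rsp H 0 2 ⊓ Rsp H 1 2 := by
  constructor
  · exact ⟨_, rfl⟩
  · have h := slot1_eq (col2 H hd x)
    rw [h2, h3, map_zero] at h
    rw [h]
    exact Submodule.sub_mem _ (Submodule.sub_mem _ (Submodule.neg_mem _ ⟨_, rfl⟩)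
      (Submodule.zero_mem _)) (Submodule.zero_mem _)

lemma mem4' (hd : ∀ i, blockOf H i i = 1) (x : KK H) (h2 : fK H 2 x = 0) (h3 : fK H 3 x = 0) :
    Bop H 0 3 (fK H 0 x) ∈ Rsp H 0 3 ⊓ Rsp H 1 3 := by
  constructor
  · exact ⟨_, rfl⟩
  · have h := slot1_eq (col3 H hd x)
    rw [h2, h3, map_zero] at h
    rw [h]
    exact Submodule.sub_mem _ (Submodule.sub_mem _ (Submodule.neg_mem _ ⟨_, rfl⟩)
      (Submodule.zero_mem _)) (Submodule.zero_mem _)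

lemma memT (hd : ∀ i, blockOf H i i = 1) (x : KK H) (h1 : fK H 1 x = 0) (hG2 : Bop H 0 2 (fK H 0 x) = 0) :
    fK H 2 x ∈ Rsp H 3 2 := by
  have h := slot3_eq (col2 H hd x)
  rw [h1, map_zero, hG2] at h
  rw [h]
  refine Submodule.sub_mem _ (Submodule.sub_mem _ (Submodule.neg_mem _ (Submodule.zero_mem _))
    (Submodule.zero_mem _)) ?_
  exact ⟨_, rfl⟩

lemma Tzero (hd : ∀ i, blockOf H i i = 1) (x : KK H) (h1 : fK H 1 x = 0) (hG2 : Bop H 0 2 (fK H 0 x) = 0)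
    (hG3 : Bop H 0 3 (fK H 0 x) = 0) (h2 : fK H 2 x = 0) : x = 0 := by
  have h3 : fK H 3 x = 0 := by
    have h := slot4_eq (col3 H hd x)
    rw [h1, h2, map_zero, map_zero, hG3] at h
    simpa using h
  have h0 : fK H 0 x = 0 := by
    have h := slot1_eq (col0 H hd x)
    rw [h1, h2, h3, map_zero, map_zero, map_zero] at h
    simpa using h
  exact x_eq_zero H x h0 h1 h2 h3

lemma memM23 (hd : ∀ i, blockOf H i i = 1) (x : KK H) (h2 : fK H 2 x = 0) (h3 : fK H 3 x = 0) :
    fK H 0 x ∈ Rsp H 1 0 := by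
  have h := slot1_eq (col0 H hd x)
  rw [h2, h3, map_zero, map_zero] at h
  rw [h]
  exact Submodule.sub_mem _ (Submodule.sub_mem _ (Submodule.neg_mem _ ⟨_, rfl⟩)
    (Submodule.zero_mem _)) (Submodule.zero_mem _)

lemma M23zero (hd : ∀ i, blockOf H i i = 1) (x : KK H) (h2 : fK H 2 x = 0) (h3 : fK H 3 x = 0)
    (h0 : fK H 0 x = 0) : x = 0 := by
  have h1 : fK H 1 x = 0 := by
    have h := slot2_eq (col1 H hd x)
    rw [h0, h2, h3, map_zero, map_zero, map_zero] at h
    simpa using h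
  exact x_eq_zero H x h0 h1 h2 h3

end mems


lemma main_ineq {b : ℕ} (hd : ∀ i, blockOf H i i = 1)
    (hb : ∀ i j, i ≠ j → (blockOf H i j).rank ≤ b) :
    3 * finrank F (KK H) ≤ 4 * a + 6 * b := by
  classical
  have hR : ∀ i j, i ≠ j → finrank F (Rsp H i j) ≤ b := fun i j hij => by
    rw [finrank_Rsp]; exact hb i j hij
  set n := finrank F (KK H) with hn
  set K0 := LinearMap.ker (fK H 0) with hK0
  set K1 := LinearMap.ker (fK H 1) with hK1
  set K2 := LinearMap.ker (fK H 2) with hK2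
  set K3 := LinearMap.ker (fK H 3) with hK3
  -- step 1 : n ≤ a + dim (K i)
  have hNa : ∀ i : Fin 4, n ≤ a + finrank F (LinearMap.ker (fK H i)) := by
    intro i
    have h := LinearMap.finrank_range_add_finrank_ker (fK H i)
    have h2 : finrank F (LinearMap.range (fK H i)) ≤ a := by
      have h3 := Submodule.finrank_le (LinearMap.range (fK H i))
      rwa [Module.finrank_fintype_fun_eq_card, Fintype.card_fin] at h3
    omega
  have hNa0 := hNa 0; have hNa1 := hNa 1; have hNa2 := hNa 2; have hNa3 := hNa 3
  rw [← hK0] at hNa0; rw [← hK1] at hNa1; rw [← hK2] at hNa2; rw [← hK3] at hNa3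
  -- step 2 : sup/inf bookkeeping
  have h12 := Submodule.finrank_sup_add_finrank_inf_eq K0 K1
  have h34 := Submodule.finrank_sup_add_finrank_inf_eq K2 K3
  have hEE := Submodule.finrank_sup_add_finrank_inf_eq (K0 ⊔ K1) (K2 ⊔ K3)
  have htop : finrank F ↥((K0 ⊔ K1) ⊔ (K2 ⊔ K3)) ≤ n := Submodule.finrank_le _
  set E := (K0 ⊔ K1) ⊓ (K2 ⊔ K3) with hE
  -- step 3 : the chain on E
  set g2 : (KK H) →ₗ[F] (Fin a → F) := (Bop H 0 2).comp (fK H 0) with hg2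
  set g3 : (KK H) →ₗ[F] (Fin a → F) := (Bop H 0 3).comp (fK H 0) with hg3
  have hc1 : finrank F E ≤ finrank F ↥(Rsp H 0 2 ⊔ Rsp H 1 2) + finrank F ↥(E ⊓ K2) :=
    finrank_le_chain E (fK H 2) _ (fun x hx => mem1' H hd x hx.2)
  have hc2 : finrank F ↥(E ⊓ K2) ≤ finrank F ↥(Rsp H 0 3 ⊔ Rsp H 1 3)
      + finrank F ↥(E ⊓ K2 ⊓ K3) :=
    finrank_le_chain (E ⊓ K2) (fK H 3) _
      (fun x hx => mem2' H hd x (LinearMap.mem_ker.1 hx.2))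
  have hc3 : finrank F ↥(E ⊓ K2 ⊓ K3) ≤ finrank F ↥(Rsp H 0 2 ⊓ Rsp H 1 2)
      + finrank F ↥(E ⊓ K2 ⊓ K3 ⊓ LinearMap.ker g2) :=
    finrank_le_chain (E ⊓ K2 ⊓ K3) g2 _
      (fun x hx => mem3' H hd x (LinearMap.mem_ker.1 hx.1.2) (LinearMap.mem_ker.1 hx.2))
  have hc4 : finrank F ↥(E ⊓ K2 ⊓ K3 ⊓ LinearMap.ker g2)
      ≤ finrank F ↥(Rsp H 0 3 ⊓ Rsp H 1 3)
      + finrank F ↥(E ⊓ K2 ⊓ K3 ⊓ LinearMap.ker g2 ⊓ LinearMap.ker g3) :=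
    finrank_le_chain (E ⊓ K2 ⊓ K3 ⊓ LinearMap.ker g2) g3 _
      (fun x hx => mem4' H hd x (LinearMap.mem_ker.1 hx.1.1.2) (LinearMap.mem_ker.1 hx.1.2))
  set F0 := E ⊓ K2 ⊓ K3 ⊓ LinearMap.ker g2 ⊓ LinearMap.ker g3 with hF0def
  -- sup + inf = sum of ranks, for the R spaces
  have hRs2 := Submodule.finrank_sup_add_finrank_inf_eq (Rsp H 0 2) (Rsp H 1 2)
  have hRs3 := Submodule.finrank_sup_add_finrank_inf_eq (Rsp H 0 3) (Rsp H 1 3)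
  have hR02 := hR 0 2 (by decide); have hR12 := hR 1 2 (by decide)
  have hR03 := hR 0 3 (by decide); have hR13 := hR 1 3 (by decide)
  have hR32 := hR 3 2 (by decide); have hR10 := hR 1 0 (by decide)
  -- step 4 : the T space
  set T := K1 ⊓ LinearMap.ker g2 ⊓ LinearMap.ker g3 with hTdef
  have hT1 : finrank F T ≤ finrank F (Rsp H 3 2) + finrank F ↥(T ⊓ K2) :=
    finrank_le_chain T (fK H 2) _
      (fun x hx => memT H hd x (LinearMap.mem_ker.1 hx.1.1) (LinearMap.mem_ker.1 hx.1.2))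
  have hTbot : T ⊓ K2 = ⊥ := by
    rw [eq_bot_iff]
    rintro x ⟨⟨⟨hx1, hxg2⟩, hxg3⟩, hx2⟩
    rw [Submodule.mem_bot]
    exact Tzero H hd x (LinearMap.mem_ker.1 hx1) (LinearMap.mem_ker.1 hxg2)
      (LinearMap.mem_ker.1 hxg3) (LinearMap.mem_ker.1 hx2)
  have hTb : finrank F T ≤ b := by
    rw [hTbot] at hT1
    simpa [finrank_bot] using hT1.trans (Nat.add_le_add_right hR32 _)
  have hTeq := finrank_eq_chain T (fK H 0)
  have hM01 : T ⊓ K0 = K0 ⊓ K1 := by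
    ext x
    constructor
    · rintro ⟨⟨⟨hx1, _⟩, _⟩, hx0⟩
      exact ⟨hx0, hx1⟩
    · rintro ⟨hx0, hx1⟩
      have h0 : fK H 0 x = 0 := LinearMap.mem_ker.1 hx0
      refine ⟨⟨⟨hx1, ?_⟩, ?_⟩, hx0⟩
      · exact LinearMap.mem_ker.2 (by rw [hg2, LinearMap.comp_apply, h0, map_zero])
      · exact LinearMap.mem_ker.2 (by rw [hg3, LinearMap.comp_apply, h0, map_zero])
  have hF0W : finrank F F0 ≤ finrank F (LinearMap.range ((fK H 0).comp T.subtype))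
      + finrank F ↥(F0 ⊓ K0) := by
    refine finrank_le_chain F0 (fK H 0) _ ?_
    rintro m ⟨⟨⟨⟨hmE, hm2⟩, hm3⟩, hmg2⟩, hmg3⟩
    obtain ⟨p, hp, q, hq, hpq⟩ := Submodule.mem_sup.1 hmE.1
    have hfq : fK H 0 m = fK H 0 q := by
      rw [← hpq, map_add, LinearMap.mem_ker.1 hp, zero_add]
    have hqT : q ∈ T := by
      refine ⟨⟨hq, ?_⟩, ?_⟩
      · refine LinearMap.mem_ker.2 ?_
        rw [hg2, LinearMap.comp_apply, ← hfq]
        exact LinearMap.mem_ker.1 hmg2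
      · refine LinearMap.mem_ker.2 ?_
        rw [hg3, LinearMap.comp_apply, ← hfq]
        exact LinearMap.mem_ker.1 hmg3
    exact ⟨⟨q, hqT⟩, hfq.symm⟩
  have hF0bot : F0 ⊓ K0 = ⊥ := by
    rw [eq_bot_iff]
    rintro x ⟨⟨⟨⟨⟨_, hx2⟩, hx3⟩, _⟩, _⟩, hx0⟩
    rw [Submodule.mem_bot]
    exact M23zero H hd x (LinearMap.mem_ker.1 hx2) (LinearMap.mem_ker.1 hx3)
      (LinearMap.mem_ker.1 hx0)
  -- step 5 : M23
  have hM23c : finrank F ↥(K2 ⊓ K3) ≤ finrank F (Rsp H 1 0)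
      + finrank F ↥(K2 ⊓ K3 ⊓ K0) :=
    finrank_le_chain (K2 ⊓ K3) (fK H 0) _
      (fun x hx => memM23 H hd x (LinearMap.mem_ker.1 hx.1) (LinearMap.mem_ker.1 hx.2))
  have hM23bot : K2 ⊓ K3 ⊓ K0 = ⊥ := by
    rw [eq_bot_iff]
    rintro x ⟨⟨hx2, hx3⟩, hx0⟩
    rw [Submodule.mem_bot]
    exact M23zero H hd x (LinearMap.mem_ker.1 hx2) (LinearMap.mem_ker.1 hx3)
      (LinearMap.mem_ker.1 hx0)
  have hM23 : finrank F ↥(K2 ⊓ K3) ≤ b := by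
    rw [hM23bot] at hM23c
    simpa [finrank_bot] using hM23c.trans (Nat.add_le_add_right hR10 _)
  -- assemble
  rw [hM01] at hTeq
  rw [hF0bot] at hF0W
  simp only [finrank_bot] at hF0W
  omega


lemma rank_add_kernel : H.rank + finrank F (KK H) = 4 * a := by
  have h := LinearMap.finrank_range_add_finrank_ker (Matrix.mulVecLin Hᵀ)
  have hdom : finrank F ((Fin 4 × Fin a) → F) = 4 * a := by
    rw [Module.finrank_fintype_fun_eq_card, Fintype.card_prod, Fintype.card_fin,
      Fintype.card_fin]
  have hr : finrank F (LinearMap.range (Matrix.mulVecLin Hᵀ)) = H.rank := by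
    rw [show finrank F (LinearMap.range (Matrix.mulVecLin Hᵀ)) = Hᵀ.rank from rfl,
      Matrix.rank_transpose]
  rw [hdom, hr] at h
  exact h

end Stmt7Aux

/-- any matrix of repair form with parameters `(4, α, β)` satisfies
`3 rank(H) ≥ 8α - 6β`; equivalently `rank(H) ≥ ⌈(8α - 6β)/3⌉`. -/
theorem stmt7 (F : Type*) [Field F] (a b : ℕ) (ha : 1 ≤ a) (hb : 1 ≤ b)
    (H : Matrix (Fin 4 × Fin a) (Fin 4 × Fin a) F)
    (hH : IsRepairForm 4 a b H) :
    3 * (H.rank : ℤ) ≥ 8 * a - 6 * b ∧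
    (H.rank : ℤ) ≥ ⌈((8 * a - 6 * b : ℚ)) / 3⌉ := by
  obtain ⟨hd, hbd⟩ := hH
  have h1 := Stmt7Aux.main_ineq H hd hbd
  have h2 := Stmt7Aux.rank_add_kernel H
  have hmain : (8 * a : ℤ) - 6 * b ≤ 3 * (H.rank : ℤ) := by
    omega
  refine ⟨hmain, ?_⟩
  rw [ge_iff_le, Int.ceil_le]
  rw [div_le_iff₀ (by norm_num : (0:ℚ) < 3)]
  have : ((8 * a - 6 * b : ℤ) : ℚ) ≤ ((3 * (H.rank : ℤ) : ℤ) : ℚ) := by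
    exact_mod_cast hmain
  push_cast at this ⊢
  linarith
end

section
/- In the (4, 3, 3) intersection construction, for every j with 2 ≤ j ≤ 4: ρ(A^(3)_{j,j}) = ρ(A^(4)_{j,j}) − δ_j, where δ_j = ρ(H^(4)|_{[j]}) − ρ(H^(4)|_{[j−1]}) and [t] = {1, …, t}. -/
/-!
Let `V` be the span of the `j`-th thick column of `H⁽⁴⁾` and `W` the span of the thick columns
before it. Since `A⁽⁴⁾_{j,j} = I`, projecting onto the `j`-th row block is injective on `V`, hence
on `V ⊓ W = S(H⁽³⁾_j)`; so `ρ(A⁽³⁾_{j,j}) = dim (V ⊓ W)`, while `ρ(A⁽⁴⁾_{j,j}) = dim V`,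
`ρ(H⁽⁴⁾|_{[j]}) = dim (V ⊔ W)` and `ρ(H⁽⁴⁾|_{[j-1]}) = dim W`. The identity is Grassmann's formula.
-/

open Module Set Submodule

theorem Matrix.rank_submatrix_id_eq_finrank_span {R m n k : Type*} [CommSemiring R] [Fintype k]
    (M : Matrix m n R) (f : k → n) :
    (M.submatrix id f).rank = finrank R (span R (range (M.col ∘ f))) :=
  rank_eq_finrank_span_cols _

theorem Matrix.rank_submatrix_eq_card_of_disjoint_ker {R m n k : Type*} [CommRing R]
    [Nontrivial R] [StrongRankCondition R] [Fintype n] (M : Matrix m n R) (e : k → m)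
    (hM : LinearIndependent R M.col)
    (hdisj : Disjoint (span R (range M.col)) (LinearMap.ker (LinearMap.funLeft R R e))) :
    (M.submatrix e id).rank = Fintype.card n := by
  rw [rank_eq_finrank_span_cols]
  exact finrank_span_eq_card (hM.map hdisj)

theorem Submodule.span_range_fst_lt_succ {R M n : Type*} [Semiring R] [AddCommMonoid M]
    [Module R M] {k : ℕ} (v : Fin k × n → M) (j : Fin k) :
    span R (range fun p : {p : Fin k × n // (p.1 : ℕ) < j + 1} => v p)
      = span R (range fun y => v (j, y))
        ⊔ span R (range fun p : {p : Fin k × n // (p.1 : ℕ) < j} => v p) := by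
  rw [← span_union]
  congr 1
  ext w
  constructor
  · rintro ⟨⟨⟨i, y⟩, hp⟩, rfl⟩
    obtain rfl | hi := eq_or_ne i j
    · exact Or.inl ⟨y, rfl⟩
    · exact Or.inr ⟨⟨(i, y), by simp only at hp ⊢; omega⟩, rfl⟩
  · rintro (⟨y, rfl⟩ | ⟨⟨p, hp⟩, rfl⟩)
    · exact ⟨⟨(j, y), Nat.lt_succ_self _⟩, rfl⟩
    · exact ⟨⟨p, by omega⟩, rfl⟩

theorem stmt8_general (F : Type*) [Field F] (a : ℕ)
    (H4 : Matrix (Fin 4 × Fin a) (Fin 4 × Fin a) F)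
    -- diagonal blocks of H⁽⁴⁾ are the identity
    (hdiag : ∀ i : Fin 4, (Matrix.of fun x y : Fin a => H4 (i, x) (i, y))
        = (1 : Matrix (Fin a) (Fin a) F))
    -- `H3 j` is the `j`-th thick column of `H⁽³⁾`, with `c j` columns
    (c : Fin 4 → ℕ)
    (H3 : ∀ j : Fin 4, Matrix (Fin 4 × Fin a) (Fin (c j)) F)
    -- the columns of `H3 j` form a basis of `S(H⁽⁴⁾_j) ∩ S(H⁽⁴⁾|_{[j-1]})`
    (hbasis : ∀ j : Fin 4, 1 ≤ (j : ℕ) →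
      LinearIndependent F (fun l : Fin (c j) => (fun r => H3 j r l : (Fin 4 × Fin a) → F)) ∧
      Submodule.span F (Set.range (fun l : Fin (c j) => (fun r => H3 j r l : (Fin 4 × Fin a) → F)))
        = Submodule.span F
            (Set.range (fun y : Fin a => (fun r => H4 r (j, y) : (Fin 4 × Fin a) → F)))
          ⊓ Submodule.span F
            (Set.range (fun p : {p : Fin 4 × Fin a // (p.1 : ℕ) < (j : ℕ)} =>
              (fun r => H4 r p.val : (Fin 4 × Fin a) → F)))) :
    ∀ j : Fin 4, 1 ≤ (j : ℕ) →
      ((Matrix.of fun (x : Fin a) (l : Fin (c j)) => H3 j (j, x) l).rank : ℤ)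
        = ((Matrix.of fun x y : Fin a => H4 (j, x) (j, y)).rank : ℤ)
          - (((H4.submatrix id
                (fun p : {p : Fin 4 × Fin a // (p.1 : ℕ) < (j : ℕ) + 1} =>
                  (p : Fin 4 × Fin a))).rank : ℤ)
            - ((H4.submatrix id
                (fun p : {p : Fin 4 × Fin a // (p.1 : ℕ) < (j : ℕ)} =>
                  (p : Fin 4 × Fin a))).rank : ℤ)) := by
  intro j hj
  obtain ⟨hind, hspan⟩ := hbasis j hj
  set V := span F (range fun y : Fin a => H4.col (j, y))
  set W := span F (range fun p : {p : Fin 4 × Fin a // (p.1 : ℕ) < j} => H4.col p)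
  have hproj : LinearIndependent F
      (LinearMap.funLeft F F (fun x : Fin a => (j, x)) ∘ fun y => H4.col (j, y)) := by
    convert (Pi.basisFun F (Fin a)).linearIndependent using 1
    ext y x
    simpa [Matrix.one_apply, Pi.single_apply, eq_comm] using congrFun (congrFun (hdiag j) x) y
  have hdisj := (Submodule.range_ker_disjoint hproj).mono_left (hspan.trans_le inf_le_left)
  have hA3 : ((H3 j).submatrix (fun x => (j, x)) id).rank = finrank F ↥(V ⊓ W) := by
    rw [(H3 j).rank_submatrix_eq_card_of_disjoint_ker _ hind hdisj, ← finrank_span_eq_card hind]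
    exact congrArg (fun U : Submodule F _ => finrank F U) hspan
  have hA4 : (Matrix.of fun x y : Fin a => H4 (j, x) (j, y)).rank = finrank F V := by
    rw [hdiag j, Matrix.rank_one, finrank_span_eq_card (LinearIndependent.of_comp _ hproj)]
  have hVsupW : (H4.submatrix id
      (fun p : {p : Fin 4 × Fin a // (p.1 : ℕ) < j + 1} => (p : Fin 4 × Fin a))).rank
      = finrank F ↥(V ⊔ W) := by
    rw [Matrix.rank_submatrix_id_eq_finrank_span, ← Submodule.span_range_fst_lt_succ]
    rfl
  have hW : (H4.submatrix id
      (fun p : {p : Fin 4 × Fin a // (p.1 : ℕ) < j} => (p : Fin 4 × Fin a))).rank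
      = finrank F W :=
    Matrix.rank_submatrix_id_eq_finrank_span _ _
  change (((H3 j).submatrix (fun x => (j, x)) id).rank : ℤ) = _
  have := Submodule.finrank_sup_add_finrank_inf_eq V W
  omega

/-- Lemma 3a for `(4,3,3)`: in the intersection construction, writing
`δ_j = ρ(H⁽⁴⁾|_{[j]}) - ρ(H⁽⁴⁾|_{[j-1]})`, we have `ρ(A⁽³⁾_{j,j}) = ρ(A⁽⁴⁾_{j,j}) - δ_j`
for every thick-column index `j` (0-indexed `1 ≤ j ≤ 3`). -/
theorem stmt8 (F : Type*) [Field F] (a : ℕ) (ha : 1 ≤ a)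
    (H4 : Matrix (Fin 4 × Fin a) (Fin 4 × Fin a) F)
    -- diagonal blocks of H⁽⁴⁾ are the identity
    (hdiag : ∀ i : Fin 4, (Matrix.of fun x y : Fin a => H4 (i, x) (i, y))
        = (1 : Matrix (Fin a) (Fin a) F))
    -- `H3 j` is the `j`-th thick column of `H⁽³⁾`, with `c j` columns
    (c : Fin 4 → ℕ)
    (H3 : ∀ j : Fin 4, Matrix (Fin 4 × Fin a) (Fin (c j)) F)
    -- the columns of `H3 j` form a basis of `S(H⁽⁴⁾_j) ∩ S(H⁽⁴⁾|_{[j-1]})`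
    (hbasis : ∀ j : Fin 4, 1 ≤ (j : ℕ) →
      LinearIndependent F (fun l : Fin (c j) => (fun r => H3 j r l : (Fin 4 × Fin a) → F)) ∧
      Submodule.span F (Set.range (fun l : Fin (c j) => (fun r => H3 j r l : (Fin 4 × Fin a) → F)))
        = Submodule.span F
            (Set.range (fun y : Fin a => (fun r => H4 r (j, y) : (Fin 4 × Fin a) → F)))
          ⊓ Submodule.span F
            (Set.range (fun p : {p : Fin 4 × Fin a // (p.1 : ℕ) < (j : ℕ)} =>
              (fun r => H4 r p.val : (Fin 4 × Fin a) → F)))) :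
    ∀ j : Fin 4, 1 ≤ (j : ℕ) →
      ((Matrix.of fun (x : Fin a) (l : Fin (c j)) => H3 j (j, x) l).rank : ℤ)
        = ((Matrix.of fun x y : Fin a => H4 (j, x) (j, y)).rank : ℤ)
          - (((H4.submatrix id
                (fun p : {p : Fin 4 × Fin a // (p.1 : ℕ) < (j : ℕ) + 1} =>
                  (p : Fin 4 × Fin a))).rank : ℤ)
            - ((H4.submatrix id
                (fun p : {p : Fin 4 × Fin a // (p.1 : ℕ) < (j : ℕ)} =>
                  (p : Fin 4 × Fin a))).rank : ℤ)) :=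
  stmt8_general F a H4 hdiag c H3 hbasis
end

section
/- In the (4, 3, 3) intersection construction, for every j with 3 ≤ j ≤ 4: Σ_{ℓ=2}^{j−1} ρ(A^(3)_{j,ℓ}) ≤ Σ_{ℓ=1}^{j−1} ρ(A^(4)_{j,ℓ}) − ρ(A^(3)_{j,j}). -/
/-!
Fix the row block `j` and let `f W` be the dimension of the projection of a subspace `W` onto the
coordinates of that block, so that the rank of the `j`-th row block of a matrix is `f` of its column
span. Then `f` is monotone and submodular: `f (A ⊓ B) + f (A ⊔ B) ≤ f A + f B`. Put
`Vₗ = S(H⁽⁴⁾_ℓ)` and `Uₗ = V₁ ⊔ ⋯ ⊔ Vₗ₋₁`; the columns of `H⁽³⁾_ℓ` span `Vₗ ⊓ Uₗ`. Summing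
`f (Vₗ ⊓ Uₗ) + f (Uₗ₊₁) ≤ f Vₗ + f Uₗ` over `ℓ < j` telescopes to
`∑_{ℓ<j} f (Vₗ ⊓ Uₗ) + f Uⱼ ≤ ∑_{ℓ<j} f Vₗ`, and `f (Vⱼ ⊓ Uⱼ) ≤ f Uⱼ` finishes the proof.
-/

open Module Submodule

theorem Matrix.rank_submatrix_eq_finrank_map_span {m m' n R : Type*} [Fintype n]
    [CommSemiring R] (M : Matrix m n R) (e : m' → m) :
    (M.submatrix e id).rank
      = finrank R ((span R (Set.range M.col)).map (LinearMap.funLeft R R e)) := by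
  rw [Matrix.rank_eq_finrank_span_cols, ← span_image, ← Set.range_comp]
  rfl

theorem Submodule.finrank_map_inf_add_finrank_map_sup_le {K V W : Type*} [DivisionRing K]
    [AddCommGroup V] [Module K V] [AddCommGroup W] [Module K W] [FiniteDimensional K W]
    (π : V →ₗ[K] W) (A B : Submodule K V) :
    finrank K ((A ⊓ B).map π) + finrank K ((A ⊔ B).map π)
      ≤ finrank K (A.map π) + finrank K (B.map π) := by
  rw [map_sup, ← finrank_sup_add_finrank_inf_eq (A.map π) (B.map π)]
  have : finrank K ((A ⊓ B).map π) ≤ finrank K ↥(A.map π ⊓ B.map π) :=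
    finrank_mono (le_inf (map_mono inf_le_left) (map_mono inf_le_right))
  omega

theorem Finset.sum_apply_inf_sup_lt_add_le_of_submodular {ι α M : Type*} [LinearOrder ι]
    [Lattice α] [OrderBot α] [AddCommMonoid M] [PartialOrder M] [IsOrderedAddMonoid M]
    (f : α → M) (hf : ∀ a b, f (a ⊓ b) + f (a ⊔ b) ≤ f a + f b) (V : ι → α) (s : Finset ι) :
    ∑ l ∈ s, f (V l ⊓ (s.filter (· < l)).sup V) + f (s.sup V) ≤ ∑ l ∈ s, f (V l) + f ⊥ := by
  classical
  induction s using Finset.induction_on_max with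
  | empty => simp
  | insert a s hlt ih =>
    have ha : a ∉ s := fun h => lt_irrefl a (hlt a h)
    have hfilter_a : (insert a s).filter (· < a) = s := by
      ext x
      simp only [Finset.mem_filter, Finset.mem_insert]
      exact ⟨fun h => h.1.resolve_left (ne_of_lt h.2), fun h => ⟨Or.inr h, hlt x h⟩⟩
    have hfilter_s : ∀ l ∈ s, (insert a s).filter (· < l) = s.filter (· < l) := fun l hl => by
      rw [Finset.filter_insert, if_neg (not_lt_of_gt (hlt l hl))]
    rw [Finset.sum_insert ha, Finset.sum_insert ha, hfilter_a,
      Finset.sum_congr rfl fun l hl => by rw [hfilter_s l hl], Finset.sup_insert]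
    calc f (V a ⊓ s.sup V) + ∑ l ∈ s, f (V l ⊓ (s.filter (· < l)).sup V) + f (V a ⊔ s.sup V)
        = (∑ l ∈ s, f (V l ⊓ (s.filter (· < l)).sup V))
            + (f (V a ⊓ s.sup V) + f (V a ⊔ s.sup V)) := by abel
      _ ≤ (∑ l ∈ s, f (V l ⊓ (s.filter (· < l)).sup V)) + (f (V a) + f (s.sup V)) :=
        add_le_add le_rfl (hf _ _)
      _ = (∑ l ∈ s, f (V l ⊓ (s.filter (· < l)).sup V) + f (s.sup V)) + f (V a) := by abel
      _ ≤ (∑ l ∈ s, f (V l) + f ⊥) + f (V a) := add_le_add ih le_rfl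
      _ = f (V a) + ∑ l ∈ s, f (V l) + f ⊥ := by abel

theorem Submodule.span_range_fst_lt_le_sup {R M ι κ : Type*} [Semiring R] [AddCommMonoid M]
    [Module R M] [LinearOrder ι] (v : ι × κ → M) {l : ι} {s : Finset ι} (hs : ∀ m < l, m ∈ s) :
    span R (Set.range fun p : {p : ι × κ // p.1 < l} => v p)
      ≤ (s.filter (· < l)).sup fun m => span R (Set.range fun y => v (m, y)) := by
  refine span_le.2 ?_
  rintro _ ⟨⟨⟨m, y⟩, hm⟩, rfl⟩
  exact Finset.le_sup (f := fun m => span R (Set.range fun y => v (m, y)))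
    (Finset.mem_filter.2 ⟨hs m hm, hm⟩) (subset_span ⟨y, rfl⟩)

theorem stmt9_general (F : Type*) [Field F] (a : ℕ)
    (H4 : Matrix (Fin 4 × Fin a) (Fin 4 × Fin a) F)
    -- `H3 j` is the `j`-th thick column of `H⁽³⁾`, with `c j` columns
    (c : Fin 4 → ℕ)
    (H3 : ∀ j : Fin 4, Matrix (Fin 4 × Fin a) (Fin (c j)) F)
    -- the columns of `H3 j` form a basis of `S(H⁽⁴⁾_j) ∩ S(H⁽⁴⁾|_{[j-1]})`
    (hbasis : ∀ j : Fin 4, 1 ≤ (j : ℕ) →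
      LinearIndependent F (fun l : Fin (c j) => (fun r => H3 j r l : (Fin 4 × Fin a) → F)) ∧
      Submodule.span F (Set.range (fun l : Fin (c j) => (fun r => H3 j r l : (Fin 4 × Fin a) → F)))
        = Submodule.span F
            (Set.range (fun y : Fin a => (fun r => H4 r (j, y) : (Fin 4 × Fin a) → F)))
          ⊓ Submodule.span F
            (Set.range (fun p : {p : Fin 4 × Fin a // (p.1 : ℕ) < (j : ℕ)} =>
              (fun r => H4 r p.val : (Fin 4 × Fin a) → F)))) :
    ∀ j : Fin 4, 2 ≤ (j : ℕ) →
      (∑ l ∈ Finset.univ.filter (fun l : Fin 4 => 1 ≤ (l : ℕ) ∧ (l : ℕ) < (j : ℕ)),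
          ((Matrix.of fun (x : Fin a) (y : Fin (c l)) => H3 l (j, x) y).rank : ℤ))
        ≤ (∑ l ∈ Finset.univ.filter (fun l : Fin 4 => (l : ℕ) < (j : ℕ)),
            ((Matrix.of fun x y : Fin a => H4 (j, x) (l, y)).rank : ℤ))
          - ((Matrix.of fun (x : Fin a) (l : Fin (c j)) => H3 j (j, x) l).rank : ℤ) := by
  intro j hj
  let f : Submodule F (Fin 4 × Fin a → F) → ℕ :=
    fun W => finrank F (W.map (LinearMap.funLeft F F fun x : Fin a => (j, x)))
  let V : Fin 4 → Submodule F (Fin 4 × Fin a → F) :=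
    fun m => span F (Set.range fun y r => H4 r (m, y))
  let s := Finset.univ.filter fun l : Fin 4 => (l : ℕ) < (j : ℕ)
  have hrank {ι : Type} [Fintype ι] (M : Matrix (Fin 4 × Fin a) ι F) :
      (Matrix.of fun x y => M (j, x) y).rank = f (span F (Set.range M.col)) :=
    M.rank_submatrix_eq_finrank_map_span _
  have hrankV (l : Fin 4) : (Matrix.of fun x y : Fin a => H4 (j, x) (l, y)).rank = f (V l) :=
    hrank fun r y => H4 r (l, y)
  have hmono {A B : Submodule F (Fin 4 × Fin a → F)} (h : A ≤ B) : f A ≤ f B :=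
    finrank_mono (map_mono h)
  have hH3 {l : Fin 4} (hl : 1 ≤ (l : ℕ)) (hs : ∀ m < l, m ∈ s) :
      f (span F (Set.range (H3 l).col)) ≤ f (V l ⊓ (s.filter (· < l)).sup V) := by
    change f (span F (Set.range fun y r => H3 l r y)) ≤ _
    rw [(hbasis l hl).2]
    exact hmono (inf_le_inf_left _ (span_range_fst_lt_le_sup (fun p r => H4 r p) hs))
  have hprefix : ∑ l ∈ Finset.univ.filter (fun l : Fin 4 => 1 ≤ (l : ℕ) ∧ (l : ℕ) < (j : ℕ)),
        f (span F (Set.range (H3 l).col)) ≤ ∑ l ∈ s, f (V l ⊓ (s.filter (· < l)).sup V) := by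
    refine (Finset.sum_le_sum fun l hl => ?_).trans
      (Finset.sum_le_sum_of_subset fun l hl => by simp_all [s])
    simp only [Finset.mem_filter] at hl
    exact hH3 hl.2.1 fun m hm => by simpa [s] using hm.trans hl.2.2
  have hlast : f (span F (Set.range (H3 j).col)) ≤ f (s.sup V) :=
    (hH3 (by omega) fun m hm => by simpa [s] using hm).trans
      (hmono (inf_le_right.trans (Finset.sup_mono (Finset.filter_subset _ s))))
  have hsum : ∑ l ∈ Finset.univ.filter (fun l : Fin 4 => 1 ≤ (l : ℕ) ∧ (l : ℕ) < (j : ℕ)),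
        f (span F (Set.range (H3 l).col)) + f (span F (Set.range (H3 j).col))
      ≤ ∑ l ∈ s, f (V l) :=
    calc _ ≤ ∑ l ∈ s, f (V l ⊓ (s.filter (· < l)).sup V) + f (s.sup V) := add_le_add hprefix hlast
      _ ≤ ∑ l ∈ s, f (V l) + f ⊥ :=
          Finset.sum_apply_inf_sup_lt_add_le_of_submodular f
            (finrank_map_inf_add_finrank_map_sup_le _) V s
      _ = ∑ l ∈ s, f (V l) := by simp [f]
  simp only [hrank, hrankV]
  rw [le_sub_iff_add_le]
  exact_mod_cast hsum

/-- Lemma 3b for `(4,3,3)`: in the intersection construction, for every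
thick-column index `j` (0-indexed `2 ≤ j ≤ 3`),
`∑_{ℓ} ρ(A⁽³⁾_{j,ℓ}) ≤ ∑_{ℓ} ρ(A⁽⁴⁾_{j,ℓ}) - ρ(A⁽³⁾_{j,j})` where on the left `ℓ` ranges
over `1 ≤ ℓ < j` (0-indexed) and on the right over `0 ≤ ℓ < j` (0-indexed). -/
theorem stmt9 (F : Type*) [Field F] (a : ℕ) (ha : 1 ≤ a)
    (H4 : Matrix (Fin 4 × Fin a) (Fin 4 × Fin a) F)
    -- diagonal blocks of H⁽⁴⁾ are the identity
    (hdiag : ∀ i : Fin 4, (Matrix.of fun x y : Fin a => H4 (i, x) (i, y))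
        = (1 : Matrix (Fin a) (Fin a) F))
    -- `H3 j` is the `j`-th thick column of `H⁽³⁾`, with `c j` columns
    (c : Fin 4 → ℕ)
    (H3 : ∀ j : Fin 4, Matrix (Fin 4 × Fin a) (Fin (c j)) F)
    -- the columns of `H3 j` form a basis of `S(H⁽⁴⁾_j) ∩ S(H⁽⁴⁾|_{[j-1]})`
    (hbasis : ∀ j : Fin 4, 1 ≤ (j : ℕ) →
      LinearIndependent F (fun l : Fin (c j) => (fun r => H3 j r l : (Fin 4 × Fin a) → F)) ∧
      Submodule.span F (Set.range (fun l : Fin (c j) => (fun r => H3 j r l : (Fin 4 × Fin a) → F)))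
        = Submodule.span F
            (Set.range (fun y : Fin a => (fun r => H4 r (j, y) : (Fin 4 × Fin a) → F)))
          ⊓ Submodule.span F
            (Set.range (fun p : {p : Fin 4 × Fin a // (p.1 : ℕ) < (j : ℕ)} =>
              (fun r => H4 r p.val : (Fin 4 × Fin a) → F)))) :
    ∀ j : Fin 4, 2 ≤ (j : ℕ) →
      (∑ l ∈ Finset.univ.filter (fun l : Fin 4 => 1 ≤ (l : ℕ) ∧ (l : ℕ) < (j : ℕ)),
          ((Matrix.of fun (x : Fin a) (y : Fin (c l)) => H3 l (j, x) y).rank : ℤ))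
        ≤ (∑ l ∈ Finset.univ.filter (fun l : Fin 4 => (l : ℕ) < (j : ℕ)),
            ((Matrix.of fun x y : Fin a => H4 (j, x) (l, y)).rank : ℤ))
          - ((Matrix.of fun (x : Fin a) (l : Fin (c j)) => H3 j (j, x) l).rank : ℤ) :=
  stmt9_general F a H4 c H3 hbasis
end

section
/- In the general intersection construction (for parameters n ≥ 4 and α), for every t with 3 ≤ t ≤ n and every j with n−t+1 ≤ j ≤ n: ρ(H^(t)_j) = ρ(A^(t)_{j,j}). -/
open scoped BigOperators

/-- Column span of a matrix with finitely many columns, as a subspace of `R → F`. -/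
def colSpan (F : Type*) [Field F] {R : Type*} {m : ℕ} (M : Matrix R (Fin m) F) :
    Submodule F (R → F) :=
  Submodule.span F (Set.range fun l : Fin m => fun r => M r l)

/-- The concatenation of the thick columns `Hcol t j'` of `H⁽ᵗ⁾` for `lo ≤ j' ≤ hi`
(all indices 0-indexed), i.e. the restriction of `H⁽ᵗ⁾` to a set of thick columns. -/
def restMat (F : Type*) [Field F] (n a : ℕ) (c : ℕ → Fin n → ℕ)
    (Hcol : ∀ t : ℕ, ∀ j : Fin n, Matrix (Fin n × Fin a) (Fin (c t j)) F)
    (t lo hi : ℕ) :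
    Matrix (Fin n × Fin a)
      (Σ j' : {j' : Fin n // lo ≤ (j' : ℕ) ∧ (j' : ℕ) ≤ hi}, Fin (c t j'.val)) F :=
  Matrix.of fun r p => Hcol t p.1.val r p.2

/-- Lemma 4a: in the general intersection construction,
`ρ(H⁽ᵗ⁾_j) = ρ(A⁽ᵗ⁾_{j,j})` for all `3 ≤ t ≤ n` and all thick columns `j` of `H⁽ᵗ⁾`. -/
theorem stmt14 (F : Type*) [Field F] (n a : ℕ) (hn : 4 ≤ n) (ha : 1 ≤ a)
    (c : ℕ → Fin n → ℕ)
    (Hcol : ∀ t : ℕ, ∀ j : Fin n, Matrix (Fin n × Fin a) (Fin (c t j)) F)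
    -- the top level `H⁽ⁿ⁾` has thick columns of width `α` ...
    (hcn : ∀ j : Fin n, c n j = a)
    -- ... and its diagonal blocks `A⁽ⁿ⁾_{i,i}` equal the identity `I_α`
    (hdiag : ∀ i : Fin n, ∀ x : Fin a, ∀ y : Fin (c n i),
      Hcol n i (i, x) y = if (x : ℕ) = (y : ℕ) then 1 else 0)
    -- for `3 ≤ t ≤ n-1`, the columns of the `j`-th thick column of `H⁽ᵗ⁾` form a
    -- basis of `S(H⁽ᵗ⁺¹⁾_j) ∩ S(H⁽ᵗ⁺¹⁾|_{{n-t, …, j-1}})` (set 0-indexed here)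
    (hbasis : ∀ t : ℕ, 3 ≤ t → t ≤ n - 1 → ∀ j : Fin n, n - t ≤ (j : ℕ) →
      LinearIndependent F
        (fun l : Fin (c t j) => (fun r => Hcol t j r l : (Fin n × Fin a) → F)) ∧
      colSpan F (Hcol t j)
        = colSpan F (Hcol (t + 1) j) ⊓
            ⨆ j' : {j' : Fin n // n - t - 1 ≤ (j' : ℕ) ∧ (j' : ℕ) < (j : ℕ)},
              colSpan F (Hcol (t + 1) j'.val))
    :
    ∀ t : ℕ, 3 ≤ t → t ≤ n → ∀ j : Fin n, n - t ≤ (j : ℕ) →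
      (Hcol t j).rank
        = (Matrix.of fun (x : Fin a) (l : Fin (c t j)) => Hcol t j (j, x) l).rank := by
  intro t ht htn j hj
  -- chain: colSpan of level t is contained in colSpan of level n
  have chain : ∀ k t', n - t' = k → 3 ≤ t' → t' ≤ n → ∀ j' : Fin n, n - t' ≤ (j' : ℕ) →
      colSpan F (Hcol t' j') ≤ colSpan F (Hcol n j') := by
    intro k
    induction k with
    | zero =>
      intro t' hk h3 hn' j' hj'
      have : t' = n := by omega
      subst this; exact le_rfl
    | succ k ih =>
      intro t' hk h3 hn' j' hj'
      have h := (hbasis t' h3 (by omega) j' hj').2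
      have h1 : colSpan F (Hcol t' j') ≤ colSpan F (Hcol (t' + 1) j') := by
        rw [h]; exact inf_le_left
      exact h1.trans (ih (t' + 1) (by omega) (by omega) (by omega) j' (by omega))
  have hle : colSpan F (Hcol t j) ≤ colSpan F (Hcol n j) :=
    chain (n - t) t rfl ht htn j hj
  -- injectivity of the projection onto block row j, on colSpan of level n
  have hinj : ∀ v ∈ colSpan F (Hcol n j), (∀ x : Fin a, v (j, x) = 0) → v = 0 := by
    intro v hv hvz
    rw [colSpan, Submodule.mem_span_range_iff_exists_fun] at hv
    obtain ⟨co, hco⟩ := hv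
    have hzero : ∀ y : Fin (c n j), co y = 0 := by
      intro y
      have hy : (y : ℕ) < a := by
        have h1 := y.isLt; have h2 := hcn j; omega
      have hx := hvz ⟨(y : ℕ), hy⟩
      rw [← hco] at hx
      have hx' : ∑ l : Fin (c n j), co l * Hcol n j (j, ⟨(y : ℕ), hy⟩) l = 0 := by
        simpa using hx
      rw [Finset.sum_eq_single y] at hx'
      · rw [hdiag j ⟨(y : ℕ), hy⟩ y] at hx'
        simpa using hx'
      · intro l _ hl
        rw [hdiag j ⟨(y : ℕ), hy⟩ l, if_neg, mul_zero]
        intro hcontra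
        exact hl (Fin.ext hcontra.symm)
      · intro h; exact absurd (Finset.mem_univ y) h
    rw [← hco]
    simp [hzero]
  -- the projection as a linear map
  set π : ((Fin n × Fin a) → F) →ₗ[F] (Fin a → F) :=
    LinearMap.funLeft F F (fun x : Fin a => ((j, x) : Fin n × Fin a)) with hπ
  -- colSpan of the projected matrix is the image of colSpan under π
  have hmap : colSpan F (Matrix.of fun (x : Fin a) (l : Fin (c t j)) => Hcol t j (j, x) l)
      = Submodule.map π (colSpan F (Hcol t j)) := by
    rw [colSpan, colSpan, Submodule.map_span]
    congr 1
    rw [← Set.range_comp]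
    rfl
  -- π restricted to colSpan (Hcol t j) is injective
  have hresinj : Function.Injective (π.domRestrict (colSpan F (Hcol t j))) := by
    rw [← LinearMap.ker_eq_bot, LinearMap.ker_eq_bot']
    rintro ⟨v, hv⟩ hzv
    have hvz : ∀ x : Fin a, v (j, x) = 0 := by
      intro x
      have h2 : π v = 0 := hzv
      exact congrFun h2 x
    have : v = 0 := hinj v (hle hv) hvz
    exact Subtype.ext this
  have hfr : Module.finrank F (colSpan F (Hcol t j))
      = Module.finrank F (Submodule.map π (colSpan F (Hcol t j))) := by
    rw [← LinearMap.range_domRestrict]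
    exact (LinearEquiv.ofInjective _ hresinj).finrank_eq
  have hr1 : (Hcol t j).rank = Module.finrank F (colSpan F (Hcol t j)) := by
    rw [Matrix.rank_eq_finrank_span_cols]; rfl
  have hr2 : (Matrix.of fun (x : Fin a) (l : Fin (c t j)) => Hcol t j (j, x) l).rank
      = Module.finrank F (colSpan F
          (Matrix.of fun (x : Fin a) (l : Fin (c t j)) => Hcol t j (j, x) l)) := by
    rw [Matrix.rank_eq_finrank_span_cols]; rfl
  rw [hr1, hr2, hmap, hfr]
end

section
/- In the general intersection construction (for parameters n ≥ 4 and α), for every t with 3 ≤ t ≤ n−1 and every j with n−t+1 ≤ j ≤ n: ρ(A^(t)_{j,j}) = ρ(A^(t+1)_{j,j}) − [ ρ(H^(t+1)|_{{n−t, …, j}}) − ρ(H^(t+1)|_{{n−t, …, j−1}}) ]. -/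
open scoped BigOperators

section Aux

variable {F : Type*} [Field F]

/-- Projection onto the `j`-th thick row block. -/
def projRow (F : Type*) [Field F] (n a : ℕ) (j : Fin n) :
    ((Fin n × Fin a) → F) →ₗ[F] (Fin a → F) :=
  LinearMap.funLeft F F (fun x => (j, x))

lemma iSup_subtype_congr {α : Type*} [CompleteLattice α] {ι : Type*} {P Q : ι → Prop}
    (h : ∀ i, P i ↔ Q i) (g : ι → α) :
    (⨆ i : {i // P i}, g i.val) = ⨆ i : {i // Q i}, g i.val := by
  apply le_antisymm
  · exact iSup_le fun i => le_iSup (fun p : {i // Q i} => g p.val) ⟨i.1, (h i.1).mp i.2⟩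
  · exact iSup_le fun i => le_iSup (fun p : {i // P i} => g p.val) ⟨i.1, (h i.1).mpr i.2⟩

lemma finrank_map_of_ker {V W : Type*} [AddCommGroup V] [Module F V]
    [AddCommGroup W] [Module F W] [FiniteDimensional F V]
    (π : V →ₗ[F] W) (p : Submodule F V)
    (h : ∀ v ∈ p, π v = 0 → v = 0) :
    Module.finrank F (p.map π) = Module.finrank F p := by
  rw [← LinearMap.range_domRestrict]
  apply LinearMap.finrank_range_of_inj
  rw [← LinearMap.ker_eq_bot, Submodule.eq_bot_iff]
  rintro ⟨v, hv⟩ hker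
  have hz : π v = 0 := by
    simpa [LinearMap.mem_ker, LinearMap.domRestrict_apply] using hker
  exact Subtype.ext (h v hv hz)

lemma colSpan_block {n a m : ℕ} (M : Matrix (Fin n × Fin a) (Fin m) F) (j : Fin n) :
    colSpan F (Matrix.of fun (x : Fin a) (l : Fin m) => M (j, x) l)
      = (colSpan F M).map (projRow F n a j) := by
  unfold colSpan
  rw [Submodule.map_span, ← Set.range_comp]
  rfl

lemma rank_eq_finrank_colSpan {R : Type*} [Fintype R] {m : ℕ} (M : Matrix R (Fin m) F) :
    M.rank = Module.finrank F (colSpan F M) := by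
  rw [Matrix.rank_eq_finrank_span_cols]
  rfl

end Aux

/-- Lemma 4b: in the general intersection construction, for `3 ≤ t ≤ n-1`
and each thick column `j` of `H⁽ᵗ⁾`,
`ρ(A⁽ᵗ⁾_{j,j}) = ρ(A⁽ᵗ⁺¹⁾_{j,j}) - [ρ(H⁽ᵗ⁺¹⁾|_{{n-t,…,j}}) - ρ(H⁽ᵗ⁺¹⁾|_{{n-t,…,j-1}})]`
(sets written 1-indexed as in the paper; here all indices are 0-indexed). -/
theorem stmt15 (F : Type*) [Field F] (n a : ℕ) (hn : 4 ≤ n) (ha : 1 ≤ a)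
    (c : ℕ → Fin n → ℕ)
    (Hcol : ∀ t : ℕ, ∀ j : Fin n, Matrix (Fin n × Fin a) (Fin (c t j)) F)
    -- the top level `H⁽ⁿ⁾` has thick columns of width `α` ...
    (hcn : ∀ j : Fin n, c n j = a)
    -- ... and its diagonal blocks `A⁽ⁿ⁾_{i,i}` equal the identity `I_α`
    (hdiag : ∀ i : Fin n, ∀ x : Fin a, ∀ y : Fin (c n i),
      Hcol n i (i, x) y = if (x : ℕ) = (y : ℕ) then 1 else 0)
    -- for `3 ≤ t ≤ n-1`, the columns of the `j`-th thick column of `H⁽ᵗ⁾` form a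
    -- basis of `S(H⁽ᵗ⁺¹⁾_j) ∩ S(H⁽ᵗ⁺¹⁾|_{{n-t, …, j-1}})` (set 0-indexed here)
    (hbasis : ∀ t : ℕ, 3 ≤ t → t ≤ n - 1 → ∀ j : Fin n, n - t ≤ (j : ℕ) →
      LinearIndependent F
        (fun l : Fin (c t j) => (fun r => Hcol t j r l : (Fin n × Fin a) → F)) ∧
      colSpan F (Hcol t j)
        = colSpan F (Hcol (t + 1) j) ⊓
            ⨆ j' : {j' : Fin n // n - t - 1 ≤ (j' : ℕ) ∧ (j' : ℕ) < (j : ℕ)},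
              colSpan F (Hcol (t + 1) j'.val))
    :
    ∀ t : ℕ, 3 ≤ t → t ≤ n - 1 → ∀ j : Fin n, n - t ≤ (j : ℕ) →
      ((Matrix.of fun (x : Fin a) (l : Fin (c t j)) => Hcol t j (j, x) l).rank : ℤ)
        = ((Matrix.of fun (x : Fin a) (l : Fin (c (t + 1) j)) =>
              Hcol (t + 1) j (j, x) l).rank : ℤ)
          - (((restMat F n a c Hcol (t + 1) (n - t - 1) (j : ℕ)).rank : ℤ)
            - ((restMat F n a c Hcol (t + 1) (n - t - 1) ((j : ℕ) - 1)).rank : ℤ)) := by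
  intro t h3 ht j hj
  have hjv1 : 1 ≤ (j : ℕ) := by omega
  -- injectivity of the projection on the top-level column span
  have injTop : ∀ v ∈ colSpan F (Hcol n j), projRow F n a j v = 0 → v = 0 := by
    intro v hv h0
    rw [colSpan, Submodule.mem_span_range_iff_exists_fun] at hv
    obtain ⟨d, hd⟩ := hv
    have hdz : ∀ y : Fin (c n j), d y = 0 := by
      intro y
      have hy : (y : ℕ) < a := by have h1 := y.isLt; have h2 := hcn j; omega
      have h1 : v (j, ⟨(y : ℕ), hy⟩) = 0 := congrFun h0 ⟨(y : ℕ), hy⟩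
      rw [← hd] at h1
      simp only [Finset.sum_apply, Pi.smul_apply, smul_eq_mul, hdiag] at h1
      rw [Finset.sum_eq_single y] at h1
      · simpa using h1
      · intro y' _ hne
        have : ¬ ((⟨(y : ℕ), hy⟩ : Fin a) : ℕ) = (y' : ℕ) := by
          intro hh
          exact hne (Fin.ext (by simpa using hh.symm))
        simp [this]
      · intro h; exact absurd (Finset.mem_univ y) h
    rw [← hd]
    simp [hdz]
  -- chain of inclusions up to the top level
  have chain : ∀ d : ℕ, ∀ t' : ℕ, 3 ≤ t' → t' ≤ n → n - t' ≤ d → n - t' ≤ (j : ℕ) →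
      colSpan F (Hcol t' j) ≤ colSpan F (Hcol n j) := by
    intro d
    induction d with
    | zero =>
      intro t' h1 h2 h0 _
      have : t' = n := by omega
      subst this; exact le_rfl
    | succ d ih =>
      intro t' h1 h2 h0 hj'
      by_cases hc : t' = n
      · subst hc; exact le_rfl
      · have ht' : t' ≤ n - 1 := by omega
        have hb := (hbasis t' h1 ht' j hj').2
        calc colSpan F (Hcol t' j) = _ := hb
          _ ≤ colSpan F (Hcol (t' + 1) j) := inf_le_left
          _ ≤ colSpan F (Hcol n j) := ih (t' + 1) (by omega) (by omega) (by omega) (by omega)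
  have injOn : ∀ t' : ℕ, 3 ≤ t' → t' ≤ n → n - t' ≤ (j : ℕ) →
      ∀ v ∈ colSpan F (Hcol t' j), projRow F n a j v = 0 → v = 0 :=
    fun t' h1 h2 h3' v hv => injTop v (chain n t' h1 h2 (by omega) h3' hv)
  -- diagonal block rank equals the dimension of the full thick-column span
  have hrk : ∀ t' : ℕ, 3 ≤ t' → t' ≤ n → n - t' ≤ (j : ℕ) →
      (Matrix.of fun (x : Fin a) (l : Fin (c t' j)) => Hcol t' j (j, x) l).rank
        = Module.finrank F (colSpan F (Hcol t' j)) := by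
    intro t' h1 h2 h3'
    rw [rank_eq_finrank_colSpan, colSpan_block]
    exact finrank_map_of_ker _ _ (injOn t' h1 h2 h3')
  -- rank of the restricted matrix equals the dimension of the sup of the column spans
  have hrest : ∀ hi : ℕ, ((restMat F n a c Hcol (t + 1) (n - t - 1) hi).rank)
      = Module.finrank F ↥(⨆ j' : {j' : Fin n // n - t - 1 ≤ (j' : ℕ) ∧ (j' : ℕ) ≤ hi},
          colSpan F (Hcol (t + 1) j'.val)) := by
    intro hi
    rw [Matrix.rank_eq_finrank_span_cols, Set.range_sigma_eq_iUnion_range,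
      Submodule.span_iUnion]
    rfl
  -- split off the last thick column from the sup
  have hsplit : (⨆ j' : {j' : Fin n // n - t - 1 ≤ (j' : ℕ) ∧ (j' : ℕ) ≤ (j : ℕ)}, colSpan F (Hcol (t + 1) j'.val))
      = (⨆ j' : {j' : Fin n // n - t - 1 ≤ (j' : ℕ) ∧ (j' : ℕ) ≤ (j : ℕ) - 1}, colSpan F (Hcol (t + 1) j'.val))
          ⊔ colSpan F (Hcol (t + 1) j) := by
    apply le_antisymm
    · refine iSup_le fun p => ?_
      obtain ⟨j', h1, h2⟩ := p
      by_cases hc : (j' : ℕ) = (j : ℕ)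
      · have : j' = j := Fin.ext hc
        subst this
        exact le_sup_of_le_right le_rfl
      · exact le_sup_of_le_left
          (le_iSup (fun p : {j' : Fin n // n - t - 1 ≤ (j' : ℕ) ∧ (j' : ℕ) ≤ (j : ℕ) - 1} =>
            colSpan F (Hcol (t + 1) p.val)) ⟨j', h1, by omega⟩)
    · refine sup_le (iSup_le fun p => ?_) ?_
      · exact le_iSup (fun q : {j' : Fin n // n - t - 1 ≤ (j' : ℕ) ∧ (j' : ℕ) ≤ (j : ℕ)} =>
          colSpan F (Hcol (t + 1) q.val)) ⟨p.1, p.2.1, by omega⟩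
      · exact le_iSup (fun q : {j' : Fin n // n - t - 1 ≤ (j' : ℕ) ∧ (j' : ℕ) ≤ (j : ℕ)} =>
          colSpan F (Hcol (t + 1) q.val)) ⟨j, by omega, le_rfl⟩
  -- the basis property at level t
  have hspan := (hbasis t h3 ht j hj).2
  have hW' : (⨆ j' : {j' : Fin n // n - t - 1 ≤ (j' : ℕ) ∧ (j' : ℕ) < (j : ℕ)}, colSpan F (Hcol (t + 1) j'.val))
      = ⨆ j' : {j' : Fin n // n - t - 1 ≤ (j' : ℕ) ∧ (j' : ℕ) ≤ (j : ℕ) - 1}, colSpan F (Hcol (t + 1) j'.val) :=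
    iSup_subtype_congr (fun i => by omega) (fun j' => colSpan F (Hcol (t + 1) j'))
  have hspan' : colSpan F (Hcol t j) = colSpan F (Hcol (t + 1) j) ⊓ (⨆ j' : {j' : Fin n // n - t - 1 ≤ (j' : ℕ) ∧ (j' : ℕ) ≤ (j : ℕ) - 1},
      colSpan F (Hcol (t + 1) j'.val)) := by
    rw [hspan, hW']
  have hdim := Submodule.finrank_sup_add_finrank_inf_eq (⨆ j' : {j' : Fin n // n - t - 1 ≤ (j' : ℕ) ∧ (j' : ℕ) ≤ (j : ℕ) - 1},
      colSpan F (Hcol (t + 1) j'.val)) (colSpan F (Hcol (t + 1) j))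
  rw [hrk t h3 (by omega) hj, hrk (t + 1) (by omega) (by omega) (by omega),
    hrest (j : ℕ), hrest ((j : ℕ) - 1), hsplit, hspan']
  have hcomm : (⨆ j' : {j' : Fin n // n - t - 1 ≤ (j' : ℕ) ∧ (j' : ℕ) ≤ (j : ℕ) - 1},
      colSpan F (Hcol (t + 1) j'.val)) ⊓ colSpan F (Hcol (t + 1) j) = colSpan F (Hcol (t + 1) j) ⊓ (⨆ j' : {j' : Fin n // n - t - 1 ≤ (j' : ℕ) ∧ (j' : ℕ) ≤ (j : ℕ) - 1},
      colSpan F (Hcol (t + 1) j'.val)) := inf_comm _ (colSpan F (Hcol (t + 1) j))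
  rw [hcomm] at hdim
  omega
end

section
/- In the general intersection construction (for parameters n ≥ 4 and α), for every s with 1 ≤ s ≤ n−3 and every t with 3+s ≤ t ≤ n: (s+1)(s+2)·ρ(H^(t)) ≥ 2·[ (s+1)·Σ_{j=n−t+1}^{n} ρ(A^(t)_{j,j}) − Σ_{j=n−t+2}^{n} Σ_{ℓ=n−t+1}^{j−1} ρ(A^(t)_{j,ℓ}) ]. -/
open scoped BigOperators

/-!
Write `V_j = S(H⁽ᵗ⁾_j)`, `P_j = V_{n-t} + ⋯ + V_{j-1}`, and `D`, `O` for the two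
block-rank sums. Since `V_j ⊆ S(H⁽ⁿ⁾_j)` and `A⁽ⁿ⁾_{j,j} = I`, the projection `π_j` onto
the `j`-th row block is injective on `V_j`, and the next level is `V_j ∩ P_j`. Telescoping
the modular law gives `Σ dim V_j = ρ(H) + Σ dim (V_j ∩ P_j)`, whence
`D⁽ᵗ⁾ = D⁽ᵗ⁻¹⁾ + ρ(H⁽ᵗ⁾)`; the same telescoping after applying `π_j` gives
`D⁽ᵗ⁾ ≤ O⁽ᵗ⁾ + ρ(H⁽ᵗ⁾)` and `O⁽ᵗ⁻¹⁾ + D⁽ᵗ⁻¹⁾ ≤ O⁽ᵗ⁾`. Together with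
`ρ(H⁽ᵗ⁻¹⁾) ≤ ρ(H⁽ᵗ⁾)`, induction on `s` yields the bound.
-/

open Module

section Filtration

variable {F E N : Type*} [Field F] [AddCommGroup E] [Module F E] [AddCommGroup N] [Module F N]

theorem finrank_map_eq_of_disjoint_ker {f : E →ₗ[F] N} {p : Submodule F E}
    (h : Disjoint p (LinearMap.ker f)) : finrank F (p.map f) = finrank F p := by
  rw [← LinearMap.range_domRestrict,
    LinearMap.finrank_range_of_inj (LinearMap.injective_domRestrict_iff.mpr h)]

theorem finrank_biSup_le_sum [FiniteDimensional F E] {ι : Type*} (s : Finset ι)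
    (V : ι → Submodule F E) :
    finrank F ↥(⨆ i ∈ s, V i) ≤ ∑ i ∈ s, finrank F (V i) := by
  classical
  induction s using Finset.induction_on with
  | empty => simp
  | insert i s hi ih =>
    rw [Finset.iSup_insert, Finset.sum_insert hi]
    exact (Submodule.finrank_add_le_finrank_add_finrank _ _).trans (Nat.add_le_add_left ih _)

/-- The paper's `S(H|_{{lo, …, j-1}})` when `V i = S(H_i)`. -/
def prefixSpan (V : ℕ → Submodule F E) (lo j : ℕ) : Submodule F E :=
  ⨆ i ∈ Finset.Ico lo j, V i

theorem prefixSpan_of_le (V : ℕ → Submodule F E) {lo j : ℕ} (h : j ≤ lo) :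
    prefixSpan V lo j = ⊥ := by
  simp [prefixSpan, Finset.Ico_eq_empty_of_le h]

theorem prefixSpan_succ (V : ℕ → Submodule F E) {lo j : ℕ} (h : lo ≤ j) :
    prefixSpan V lo (j + 1) = V j ⊔ prefixSpan V lo j := by
  rw [prefixSpan, Nat.Ico_succ_right_eq_insert_Ico h, Finset.iSup_insert, prefixSpan]

theorem map_prefixSpan (f : E →ₗ[F] N) (V : ℕ → Submodule F E) (lo j : ℕ) :
    (prefixSpan V lo j).map f = prefixSpan (fun i => (V i).map f) lo j := by
  simp only [prefixSpan, Submodule.map_iSup]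

theorem finrank_prefixSpan_add_sum_finrank_inf [FiniteDimensional F E]
    (V : ℕ → Submodule F E) (lo hi : ℕ) :
    finrank F (prefixSpan V lo hi)
        + ∑ j ∈ Finset.Ico lo hi, finrank F ↥(V j ⊓ prefixSpan V lo j)
      = ∑ j ∈ Finset.Ico lo hi, finrank F (V j) := by
  induction hi with
  | zero => simp [prefixSpan_of_le V (Nat.zero_le lo)]
  | succ hi ih =>
    by_cases h : lo ≤ hi
    · rw [Finset.sum_Ico_succ_top h, Finset.sum_Ico_succ_top h, prefixSpan_succ V h]
      have := Submodule.finrank_sup_add_finrank_inf_eq (V hi) (prefixSpan V lo hi)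
      omega
    · rw [prefixSpan_of_le V (show hi + 1 ≤ lo by omega), Finset.Ico_eq_empty_of_le (by omega)]
      simp

theorem finrank_map_prefixSpan_add_sum_le [FiniteDimensional F N] (f : E →ₗ[F] N)
    (V : ℕ → Submodule F E) (lo hi : ℕ) :
    finrank F ((prefixSpan V lo hi).map f)
        + ∑ j ∈ Finset.Ico lo hi, finrank F ((V j ⊓ prefixSpan V lo j).map f)
      ≤ ∑ j ∈ Finset.Ico lo hi, finrank F ((V j).map f) := by
  rw [← finrank_prefixSpan_add_sum_finrank_inf (fun i => (V i).map f), map_prefixSpan]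
  refine Nat.add_le_add_left (Finset.sum_le_sum fun j _ => ?_) _
  rw [← map_prefixSpan]
  exact Submodule.finrank_mono (Submodule.map_inf_le f)

variable (π : ℕ → E →ₗ[F] N) (W : ℕ → ℕ → Submodule F E) (hi : ℕ)

def IntersectionStep (k : ℕ) : Prop :=
  ∀ j, k < j → j < hi → W (k + 1) j = W k j ⊓ prefixSpan (W k) k j

def InjOnBlocks (k : ℕ) : Prop :=
  ∀ j, k ≤ j → j < hi → Disjoint (W k j) (LinearMap.ker (π j))

/-- With `W k ℓ = S(H_ℓ)` and `π j` the projection onto the `j`-th row block,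
`finrank ((W k ℓ).map (π j))` is `ρ(A_{j,ℓ})`. -/
noncomputable def diagRank (k : ℕ) : ℕ :=
  ∑ j ∈ Finset.Ico k hi, finrank F ((W k j).map (π j))

noncomputable def offDiagRank (k : ℕ) : ℕ :=
  ∑ j ∈ Finset.Ico k hi, ∑ ℓ ∈ Finset.Ico k j, finrank F ((W k ℓ).map (π j))

noncomputable def spanRank (k : ℕ) : ℕ :=
  finrank F (prefixSpan (W k) k hi)

variable {π W hi}

theorem IntersectionStep.le {k j : ℕ} (h : IntersectionStep W hi k) (hkj : k < j)
    (hj : j < hi) : W (k + 1) j ≤ W k j :=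
  (h j hkj hj).trans_le inf_le_left

theorem InjOnBlocks.succ {k : ℕ} (hinj : InjOnBlocks π W hi k) (h : IntersectionStep W hi k) :
    InjOnBlocks π W hi (k + 1) :=
  fun j hkj hj => (hinj j (by omega) hj).mono_left (h.le hkj hj)

theorem InjOnBlocks.of_intersectionSteps {lo k : ℕ} (hinj : InjOnBlocks π W hi lo)
    (hstep : ∀ m, lo ≤ m → m < k → IntersectionStep W hi m) (hk : lo ≤ k) :
    InjOnBlocks π W hi k := by
  induction k, hk using Nat.le_induction with
  | base => exact hinj
  | succ k hk ih =>
    exact (ih fun m h1 h2 => hstep m h1 (by omega)).succ (hstep k hk (by omega))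

theorem InjOnBlocks.diagRank_eq {k : ℕ} (hinj : InjOnBlocks π W hi k) :
    diagRank π W hi k = ∑ j ∈ Finset.Ico k hi, finrank F (W k j) := by
  refine Finset.sum_congr rfl fun j hj => ?_
  rw [Finset.mem_Ico] at hj
  exact finrank_map_eq_of_disjoint_ker (hinj j hj.1 hj.2)

theorem diagRank_le_offDiagRank_add_spanRank [FiniteDimensional F E] [FiniteDimensional F N]
    {k : ℕ} (hinj : InjOnBlocks π W hi k) :
    diagRank π W hi k ≤ offDiagRank π W hi k + spanRank W hi k := by
  rw [hinj.diagRank_eq, ← finrank_prefixSpan_add_sum_finrank_inf, spanRank, add_comm]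
  refine Nat.add_le_add_right (Finset.sum_le_sum fun j hj => ?_) _
  rw [Finset.mem_Ico] at hj
  calc finrank F ↥(W k j ⊓ prefixSpan (W k) k j)
      = finrank F ((W k j ⊓ prefixSpan (W k) k j).map (π j)) :=
        (finrank_map_eq_of_disjoint_ker ((hinj j hj.1 hj.2).mono_left inf_le_left)).symm
    _ ≤ finrank F ((prefixSpan (W k) k j).map (π j)) :=
        Submodule.finrank_mono (Submodule.map_mono inf_le_right)
    _ ≤ _ := by
        rw [map_prefixSpan]
        exact finrank_biSup_le_sum _ _

theorem diagRank_eq_diagRank_succ_add_spanRank [FiniteDimensional F E] {k : ℕ}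
    (hinj : InjOnBlocks π W hi k) (h : IntersectionStep W hi k) :
    diagRank π W hi k = diagRank π W hi (k + 1) + spanRank W hi k := by
  have hsum : ∑ j ∈ Finset.Ico k hi, finrank F ↥(W k j ⊓ prefixSpan (W k) k j)
      = ∑ j ∈ Finset.Ico (k + 1) hi, finrank F (W (k + 1) j) := by
    rw [← Finset.sum_subset (Finset.Ico_subset_Ico_left k.le_succ)]
    · refine Finset.sum_congr rfl fun j hj => ?_
      rw [Finset.mem_Ico] at hj
      rw [h j (by omega) hj.2]
    · intro j hj hj'
      simp only [Finset.mem_Ico] at hj hj'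
      simp [prefixSpan_of_le (W k) (show j ≤ k by omega)]
  rw [hinj.diagRank_eq, (hinj.succ h).diagRank_eq, ← hsum, spanRank,
    ← finrank_prefixSpan_add_sum_finrank_inf, add_comm]

theorem offDiagRank_succ_add_diagRank_succ_le [FiniteDimensional F N] {k : ℕ}
    (h : IntersectionStep W hi k) :
    offDiagRank π W hi (k + 1) + diagRank π W hi (k + 1) ≤ offDiagRank π W hi k := by
  have hrow : ∀ j ∈ Finset.Ico (k + 1) hi,
      ∑ ℓ ∈ Finset.Ico (k + 1) j, finrank F ((W (k + 1) ℓ).map (π j))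
          + finrank F ((W (k + 1) j).map (π j))
        ≤ ∑ ℓ ∈ Finset.Ico k j, finrank F ((W k ℓ).map (π j)) := by
    intro j hj
    rw [Finset.mem_Ico] at hj
    have hoff : ∑ ℓ ∈ Finset.Ico (k + 1) j, finrank F ((W (k + 1) ℓ).map (π j))
        ≤ ∑ ℓ ∈ Finset.Ico k j,
            finrank F ((W k ℓ ⊓ prefixSpan (W k) k ℓ).map (π j)) := by
      refine le_of_eq_of_le (Finset.sum_congr rfl fun ℓ hℓ => ?_)
        (Finset.sum_le_sum_of_subset (Finset.Ico_subset_Ico_left k.le_succ))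
      rw [Finset.mem_Ico] at hℓ
      rw [h ℓ (by omega) (by omega)]
    have hdiag : finrank F ((W (k + 1) j).map (π j))
        ≤ finrank F ((prefixSpan (W k) k j).map (π j)) := by
      rw [h j (by omega) hj.2]
      exact Submodule.finrank_mono (Submodule.map_mono inf_le_right)
    have := finrank_map_prefixSpan_add_sum_le (π j) (W k) k j
    omega
  calc offDiagRank π W hi (k + 1) + diagRank π W hi (k + 1)
      ≤ ∑ j ∈ Finset.Ico (k + 1) hi, ∑ ℓ ∈ Finset.Ico k j,
          finrank F ((W k ℓ).map (π j)) := by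
        rw [offDiagRank, diagRank, ← Finset.sum_add_distrib]
        exact Finset.sum_le_sum hrow
    _ ≤ offDiagRank π W hi k :=
        Finset.sum_le_sum_of_subset (Finset.Ico_subset_Ico_left k.le_succ)

theorem spanRank_succ_le [FiniteDimensional F E] {k : ℕ} (h : IntersectionStep W hi k) :
    spanRank W hi (k + 1) ≤ spanRank W hi k := by
  refine Submodule.finrank_mono (iSup₂_le fun j hj => ?_)
  rw [Finset.mem_Ico] at hj
  exact (h.le (by omega) hj.2).trans
    (le_biSup (W k) (Finset.mem_Ico.mpr ⟨by omega, hj.2⟩))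

theorem two_mul_diagRank_le [FiniteDimensional F E] [FiniteDimensional F N] (s : ℕ) {k : ℕ}
    (hinj : InjOnBlocks π W hi k)
    (hstep : ∀ m, k ≤ m → m < k + s → IntersectionStep W hi m) :
    2 * (s + 1) * diagRank π W hi k
      ≤ 2 * offDiagRank π W hi k + (s + 1) * (s + 2) * spanRank W hi k := by
  induction s generalizing k with
  | zero =>
    have := diagRank_le_offDiagRank_add_spanRank hinj
    omega
  | succ s ih =>
    have h := hstep k le_rfl (by omega)
    have hnext := ih (hinj.succ h) fun m h1 h2 => hstep m (by omega) (by omega)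
    have hdiag := diagRank_eq_diagRank_succ_add_spanRank hinj h
    have hoff := offDiagRank_succ_add_diagRank_succ_le (π := π) h
    have hspan := Nat.mul_le_mul_left ((s + 1) * (s + 2)) (spanRank_succ_le h)
    rw [hdiag]
    linarith

end Filtration

theorem Fin.sum_filter_eq_sum_filter_range {M : Type*} [AddCommMonoid M] {n : ℕ}
    (p : ℕ → Prop) [DecidablePred p] (g : ℕ → M) :
    ∑ j ∈ Finset.univ.filter (fun j : Fin n => p j), g j
      = ∑ i ∈ (Finset.range n).filter p, g i := by
  rw [Finset.sum_filter, Finset.sum_filter,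
    Fin.sum_univ_eq_sum_range (fun i => if p i then g i else 0)]

theorem Fin.iSup_subtype_eq_biSup_Ico {α : Type*} [CompleteLattice α] {n lo hi : ℕ}
    (hhi : hi ≤ n) (p : Fin n → Prop) (hp : ∀ j : Fin n, p j ↔ lo ≤ j ∧ (j : ℕ) < hi)
    (g : ℕ → α) : ⨆ j : {j : Fin n // p j}, g j = ⨆ i ∈ Finset.Ico lo hi, g i := by
  apply le_antisymm
  · exact iSup_le fun j => le_biSup g (Finset.mem_Ico.mpr ((hp j).mp j.2))
  · refine iSup₂_le fun i hi' => ?_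
    rw [Finset.mem_Ico] at hi'
    exact le_iSup_of_le ⟨⟨i, by omega⟩, (hp _).mpr hi'⟩ le_rfl

section MatrixBlocks

variable {F : Type*} [Field F]

theorem colSpan_eq_range_mulVecLin {R : Type*} {m : ℕ} (M : Matrix R (Fin m) F) :
    colSpan F M = LinearMap.range M.mulVecLin :=
  (Matrix.range_mulVecLin M).symm

theorem rank_of_rowBlock {n a m : ℕ} (M : Matrix (Fin n × Fin a) (Fin m) F)
    (i : Fin n) :
    (Matrix.of fun x l => M (i, x) l).rank
      = finrank F ((colSpan F M).map (LinearMap.funLeft F F (Prod.mk i))) := by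
  rw [Matrix.rank_eq_finrank_span_cols, colSpan, Submodule.map_span, ← Set.range_comp]
  rfl

theorem disjoint_colSpan_ker_of_rowBlock_eq_one {n a m : ℕ}
    (M : Matrix (Fin n × Fin a) (Fin m) F) (i : Fin n) (hm : m = a)
    (hM : ∀ x y, M (i, x) y = if (x : ℕ) = (y : ℕ) then 1 else 0) :
    Disjoint (colSpan F M) (LinearMap.ker (LinearMap.funLeft F F (Prod.mk i))) := by
  rw [colSpan_eq_range_mulVecLin, LinearMap.disjoint_ker]
  rintro _ ⟨u, rfl⟩ h0
  obtain rfl : u = 0 := funext fun y => by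
    simpa [Matrix.mulVec, dotProduct, hM, LinearMap.funLeft, Fin.val_inj] using
      congrFun h0 ⟨y, hm ▸ y.isLt⟩
  simp

end MatrixBlocks

section IntersectionConstruction

noncomputable def blockRowProj (F : Type*) [Field F] (n a j : ℕ) :
    ((Fin n × Fin a) → F) →ₗ[F] (Fin a → F) :=
  if h : j < n then LinearMap.funLeft F F (Prod.mk ⟨j, h⟩) else 0

variable {F : Type*} [Field F] {n a : ℕ} {c : ℕ → Fin n → ℕ}

/-- Level `k` of the construction is `H⁽ⁿ⁻ᵏ⁾`, whose thick columns are those with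
index `j ≥ k`. -/
def levelSpan (Hcol : ∀ t : ℕ, ∀ j : Fin n, Matrix (Fin n × Fin a) (Fin (c t j)) F)
    (k j : ℕ) : Submodule F ((Fin n × Fin a) → F) :=
  if h : j < n then colSpan F (Hcol (n - k) ⟨j, h⟩) else ⊥

variable (Hcol : ∀ t : ℕ, ∀ j : Fin n, Matrix (Fin n × Fin a) (Fin (c t j)) F)

theorem blockRowProj_of_lt {j : ℕ} (h : j < n) :
    blockRowProj F n a j = LinearMap.funLeft F F (Prod.mk ⟨j, h⟩) :=
  dif_pos h

theorem levelSpan_of_lt (k : ℕ) {j : ℕ} (h : j < n) :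
    levelSpan Hcol k j = colSpan F (Hcol (n - k) ⟨j, h⟩) :=
  dif_pos h

theorem levelSpan_val (k : ℕ) (j : Fin n) : levelSpan Hcol k j = colSpan F (Hcol (n - k) j) :=
  levelSpan_of_lt Hcol k j.isLt

theorem rank_rowBlock_eq {t : ℕ} (ht : t ≤ n) (i l : Fin n) :
    (Matrix.of fun x y => Hcol t l (i, x) y).rank
      = finrank F ((levelSpan Hcol (n - t) l).map (blockRowProj F n a i)) := by
  rw [levelSpan_val, Nat.sub_sub_self ht, blockRowProj_of_lt i.isLt]
  exact rank_of_rowBlock _ _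

theorem injOnBlocks_zero (hcn : ∀ j : Fin n, c n j = a)
    (hdiag : ∀ i : Fin n, ∀ x : Fin a, ∀ y : Fin (c n i),
      Hcol n i (i, x) y = if (x : ℕ) = (y : ℕ) then 1 else 0) :
    InjOnBlocks (blockRowProj F n a) (levelSpan Hcol) n 0 := by
  intro j _ hj
  rw [levelSpan_of_lt Hcol 0 hj, Nat.sub_zero, blockRowProj_of_lt hj]
  exact disjoint_colSpan_ker_of_rowBlock_eq_one _ _ (hcn _) (hdiag _)

theorem intersectionStep_levelSpan
    (hspan : ∀ t : ℕ, 3 ≤ t → t ≤ n - 1 → ∀ j : Fin n, n - t ≤ (j : ℕ) →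
      colSpan F (Hcol t j)
        = colSpan F (Hcol (t + 1) j) ⊓
            ⨆ j' : {j' : Fin n // n - t - 1 ≤ (j' : ℕ) ∧ (j' : ℕ) < (j : ℕ)},
              colSpan F (Hcol (t + 1) j'.val))
    {k : ℕ} (hk : k + 4 ≤ n) :
    IntersectionStep (levelSpan Hcol) n k := by
  intro j hkj hj
  have h := hspan (n - (k + 1)) (by omega) (by omega) ⟨j, hj⟩ (by simp only; omega)
  rw [show n - (k + 1) + 1 = n - k by omega, show n - (n - (k + 1)) - 1 = k by omega] at h
  rw [levelSpan_of_lt Hcol _ hj, levelSpan_of_lt Hcol _ hj, h, prefixSpan,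
    ← Fin.iSup_subtype_eq_biSup_Ico hj.le (fun j' : Fin n => k ≤ j' ∧ (j' : ℕ) < j)
      (fun _ => Iff.rfl)]
  simp only [levelSpan_val]

theorem rank_restMat_eq_spanRank {t : ℕ} (ht : t ≤ n) :
    (restMat F n a c Hcol t (n - t) (n - 1)).rank = spanRank (levelSpan Hcol) n (n - t) := by
  have hspan : Submodule.span F (Set.range (restMat F n a c Hcol t (n - t) (n - 1)).col)
      = prefixSpan (levelSpan Hcol (n - t)) (n - t) n := by
    rw [prefixSpan, ← Fin.iSup_subtype_eq_biSup_Ico le_rfl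
        (fun j : Fin n => n - t ≤ j ∧ (j : ℕ) ≤ n - 1) (fun j => by have := j.isLt; omega),
      Set.range_sigma_eq_iUnion_range, Submodule.span_iUnion]
    simp only [levelSpan_val]
    rw [Nat.sub_sub_self ht]
    rfl
  rw [Matrix.rank_eq_finrank_span_cols, hspan, spanRank]

theorem sum_rank_diagBlock_eq_diagRank {t : ℕ} (ht : t ≤ n) :
    ∑ j ∈ Finset.univ.filter (fun j : Fin n => n - t ≤ (j : ℕ)),
        (Matrix.of fun (x : Fin a) (l : Fin (c t j)) => Hcol t j (j, x) l).rank
      = diagRank (blockRowProj F n a) (levelSpan Hcol) n (n - t) := by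
  simp only [diagRank, rank_rowBlock_eq Hcol ht]
  rw [Fin.sum_filter_eq_sum_filter_range (fun j => n - t ≤ j)
    (fun j => finrank F ((levelSpan Hcol (n - t) j).map (blockRowProj F n a j)))]
  congr 1
  ext
  simp only [Finset.mem_filter, Finset.mem_range, Finset.mem_Ico]
  omega

theorem sum_rank_offDiagBlock_eq_offDiagRank {t : ℕ} (ht : t ≤ n) :
    ∑ j ∈ Finset.univ.filter (fun j : Fin n => n - t + 1 ≤ (j : ℕ)),
        ∑ l ∈ Finset.univ.filter (fun l : Fin n => n - t ≤ (l : ℕ) ∧ (l : ℕ) < (j : ℕ)),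
          (Matrix.of fun (x : Fin a) (y : Fin (c t l)) => Hcol t l (j, x) y).rank
      = offDiagRank (blockRowProj F n a) (levelSpan Hcol) n (n - t) := by
  set row := fun j : ℕ => ∑ ℓ ∈ Finset.Ico (n - t) j,
    finrank F ((levelSpan Hcol (n - t) ℓ).map (blockRowProj F n a j))
  have hrow : ∀ j : Fin n,
      ∑ l ∈ Finset.univ.filter
          (fun l : Fin n => n - t ≤ (l : ℕ) ∧ (l : ℕ) < (j : ℕ)),
        (Matrix.of fun (x : Fin a) (y : Fin (c t l)) => Hcol t l (j, x) y).rank = row j := by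
    intro j
    simp only [rank_rowBlock_eq Hcol ht]
    rw [Fin.sum_filter_eq_sum_filter_range (fun l => n - t ≤ l ∧ l < j)
      (fun l => finrank F ((levelSpan Hcol (n - t) l).map (blockRowProj F n a j)))]
    congr 1
    ext
    simp only [Finset.mem_filter, Finset.mem_range, Finset.mem_Ico]
    omega
  simp only [hrow, offDiagRank]
  rw [Fin.sum_filter_eq_sum_filter_range (fun j => n - t + 1 ≤ j) row]
  refine Finset.sum_subset ?_ fun j hj hj' => ?_
  · intro j
    simp only [Finset.mem_filter, Finset.mem_range, Finset.mem_Ico]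
    omega
  · simp only [Finset.mem_filter, Finset.mem_range, Finset.mem_Ico] at hj hj'
    simp [row, show j = n - t by omega]

end IntersectionConstruction

theorem stmt18_general (F : Type*) [Field F] (n a : ℕ)
    (c : ℕ → Fin n → ℕ)
    (Hcol : ∀ t : ℕ, ∀ j : Fin n, Matrix (Fin n × Fin a) (Fin (c t j)) F)
    -- the top level `H⁽ⁿ⁾` has thick columns of width `α` ...
    (hcn : ∀ j : Fin n, c n j = a)
    -- ... and its diagonal blocks `A⁽ⁿ⁾_{i,i}` equal the identity `I_α`
    (hdiag : ∀ i : Fin n, ∀ x : Fin a, ∀ y : Fin (c n i),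
      Hcol n i (i, x) y = if (x : ℕ) = (y : ℕ) then 1 else 0)
    -- for `3 ≤ t ≤ n-1`, the columns of the `j`-th thick column of `H⁽ᵗ⁾` form a
    -- basis of `S(H⁽ᵗ⁺¹⁾_j) ∩ S(H⁽ᵗ⁺¹⁾|_{{n-t, …, j-1}})` (set 0-indexed here)
    (hbasis : ∀ t : ℕ, 3 ≤ t → t ≤ n - 1 → ∀ j : Fin n, n - t ≤ (j : ℕ) →
      LinearIndependent F
        (fun l : Fin (c t j) => (fun r => Hcol t j r l : (Fin n × Fin a) → F)) ∧
      colSpan F (Hcol t j)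
        = colSpan F (Hcol (t + 1) j) ⊓
            ⨆ j' : {j' : Fin n // n - t - 1 ≤ (j' : ℕ) ∧ (j' : ℕ) < (j : ℕ)},
              colSpan F (Hcol (t + 1) j'.val))
    :
    ∀ s : ℕ, 1 ≤ s → s ≤ n - 3 → ∀ t : ℕ, 3 + s ≤ t → t ≤ n →
      ((s : ℤ) + 1) * ((s : ℤ) + 2) *
          ((restMat F n a c Hcol t (n - t) (n - 1)).rank : ℤ)
        ≥ 2 * (((s : ℤ) + 1) *
              (∑ j ∈ Finset.univ.filter (fun j : Fin n => n - t ≤ (j : ℕ)),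
                ((Matrix.of fun (x : Fin a) (l : Fin (c t j)) =>
                    Hcol t j (j, x) l).rank : ℤ))
            - ∑ j ∈ Finset.univ.filter (fun j : Fin n => n - t + 1 ≤ (j : ℕ)),
                ∑ l ∈ Finset.univ.filter
                    (fun l : Fin n => n - t ≤ (l : ℕ) ∧ (l : ℕ) < (j : ℕ)),
                  ((Matrix.of fun (x : Fin a) (y : Fin (c t l)) =>
                      Hcol t l (j, x) y).rank : ℤ)) := by
  intro s _ _ t hst ht
  have hstep : ∀ m, m + 4 ≤ n → IntersectionStep (levelSpan Hcol) n m :=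
    fun m hm => intersectionStep_levelSpan Hcol (fun t h3 ht j hj => (hbasis t h3 ht j hj).2) hm
  have hinj : InjOnBlocks (blockRowProj F n a) (levelSpan Hcol) n (n - t) :=
    (injOnBlocks_zero Hcol hcn hdiag).of_intersectionSteps
      (fun m _ hm => hstep m (by omega)) (Nat.zero_le _)
  have key := two_mul_diagRank_le s hinj fun m _ hm => hstep m (by omega)
  simp only [← Nat.cast_sum]
  rw [rank_restMat_eq_spanRank Hcol ht, sum_rank_diagBlock_eq_diagRank Hcol ht,
    sum_rank_offDiagBlock_eq_offDiagRank Hcol ht]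
  have keyZ : (2 * (s + 1) * diagRank (blockRowProj F n a) (levelSpan Hcol) n (n - t) : ℤ)
      ≤ 2 * offDiagRank (blockRowProj F n a) (levelSpan Hcol) n (n - t)
        + (s + 1) * (s + 2) * spanRank (levelSpan Hcol) n (n - t) := by
    exact_mod_cast key
  linarith

/-- Theorem 5: in the general intersection construction, for every
`1 ≤ s ≤ n-3` and every `3+s ≤ t ≤ n`,
`(s+1)(s+2) ρ(H⁽ᵗ⁾) ≥ 2[(s+1) ∑_j ρ(A⁽ᵗ⁾_{j,j}) - ∑_j ∑_{ℓ<j} ρ(A⁽ᵗ⁾_{j,ℓ})]`,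
sums over the thick columns of `H⁽ᵗ⁾` (0-indexed `n-t ≤ j ≤ n-1`). -/
theorem stmt18 (F : Type*) [Field F] (n a : ℕ) (hn : 4 ≤ n) (ha : 1 ≤ a)
    (c : ℕ → Fin n → ℕ)
    (Hcol : ∀ t : ℕ, ∀ j : Fin n, Matrix (Fin n × Fin a) (Fin (c t j)) F)
    -- the top level `H⁽ⁿ⁾` has thick columns of width `α` ...
    (hcn : ∀ j : Fin n, c n j = a)
    -- ... and its diagonal blocks `A⁽ⁿ⁾_{i,i}` equal the identity `I_α`
    (hdiag : ∀ i : Fin n, ∀ x : Fin a, ∀ y : Fin (c n i),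
      Hcol n i (i, x) y = if (x : ℕ) = (y : ℕ) then 1 else 0)
    -- for `3 ≤ t ≤ n-1`, the columns of the `j`-th thick column of `H⁽ᵗ⁾` form a
    -- basis of `S(H⁽ᵗ⁺¹⁾_j) ∩ S(H⁽ᵗ⁺¹⁾|_{{n-t, …, j-1}})` (set 0-indexed here)
    (hbasis : ∀ t : ℕ, 3 ≤ t → t ≤ n - 1 → ∀ j : Fin n, n - t ≤ (j : ℕ) →
      LinearIndependent F
        (fun l : Fin (c t j) => (fun r => Hcol t j r l : (Fin n × Fin a) → F)) ∧
      colSpan F (Hcol t j)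
        = colSpan F (Hcol (t + 1) j) ⊓
            ⨆ j' : {j' : Fin n // n - t - 1 ≤ (j' : ℕ) ∧ (j' : ℕ) < (j : ℕ)},
              colSpan F (Hcol (t + 1) j'.val))
    :
    ∀ s : ℕ, 1 ≤ s → s ≤ n - 3 → ∀ t : ℕ, 3 + s ≤ t → t ≤ n →
      ((s : ℤ) + 1) * ((s : ℤ) + 2) *
          ((restMat F n a c Hcol t (n - t) (n - 1)).rank : ℤ)
        ≥ 2 * (((s : ℤ) + 1) *
              (∑ j ∈ Finset.univ.filter (fun j : Fin n => n - t ≤ (j : ℕ)),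
                ((Matrix.of fun (x : Fin a) (l : Fin (c t j)) =>
                    Hcol t j (j, x) l).rank : ℤ))
            - ∑ j ∈ Finset.univ.filter (fun j : Fin n => n - t + 1 ≤ (j : ℕ)),
                ∑ l ∈ Finset.univ.filter
                    (fun l : Fin n => n - t ≤ (l : ℕ) ∧ (l : ℕ) < (j : ℕ)),
                  ((Matrix.of fun (x : Fin a) (y : Fin (c t l)) =>
                      Hcol t l (j, x) y).rank : ℤ)) :=
  stmt18_general F n a c Hcol hcn hdiag hbasis
end
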